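/- arXiv:2310.04764 — 3 statements merged into one kernel-verified Lean document; each statement's English description precedes it below -/
import Mathlib

section
/- If D is a derived algebra of a multi-sorted algebra A (i.e., D has the same sorts and universes as A, but its operations are interpretations of first-order terms over A's signature), then every subset L of the universe of A that is recognizable in A (via a homomorphism into a locally finite algebra) is also recognizable in D. -/
set_option autoImplicit false

namespace MSAlg

/-- A multi-sorted functional signature over a set of sorts `S`. -/
structure Sig (S : Type) : Type 1 where
  Sym : Type
  args : Sym → List S
  res : Sym → S

/-- A multi-sorted `F`-algebra: a universe for each sort, and an interpretation
of each function symbol as a function of matching sorts. -/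
structure Alg {S : Type} (F : Sig S) : Type 1 where
  carrier : S → Type
  interp : ∀ f : F.Sym,
    ((i : Fin (F.args f).length) → carrier ((F.args f).get i)) → carrier (F.res f)

/-- An algebra is locally finite if each sorted universe is finite. -/
def LocFin {S : Type} {F : Sig S} (A : Alg F) : Prop := ∀ s, Finite (A.carrier s)

/-- Homomorphisms of multi-sorted algebras. -/
structure Hom {S : Type} {F : Sig S} (A B : Alg F) where
  toFun : ∀ s, A.carrier s → B.carrier s
  map : ∀ (f : F.Sym) (as : (i : Fin (F.args f).length) → A.carrier ((F.args f).get i)),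
    toFun _ (A.interp f as) = B.interp f (fun i => toFun _ (as i))

/-- The (disjoint) union of all the sorted universes of an algebra. -/
def Univ {S : Type} {F : Sig S} (A : Alg F) : Type := Σ s, A.carrier s

/-- `L` is recognizable in `A` iff it is the inverse image, under a homomorphism
into a locally finite algebra `B`, of a subset `C` of the universe of `B`. -/
def Recog {S : Type} {F : Sig S} (A : Alg F) (L : Set (Univ A)) : Prop :=
  ∃ B : Alg F, LocFin B ∧ ∃ (h : Hom A B) (C : Set (Univ B)),
    L = {a | (⟨a.1, h.toFun a.1 a.2⟩ : Univ B) ∈ C}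

/-- First-order terms over a signature `F` with sorted variables from `V`. -/
inductive Term {S : Type} (F : Sig S) (V : Type) (sortOf : V → S) : S → Type
  | var (v : V) : Term F V sortOf (sortOf v)
  | app (f : F.Sym)
      (ts : (i : Fin (F.args f).length) → Term F V sortOf ((F.args f).get i)) :
      Term F V sortOf (F.res f)

/-- Evaluation of a term in an algebra, under an assignment of the variables. -/
def Term.eval {S : Type} {F : Sig S} {V : Type} {sortOf : V → S} (A : Alg F)
    (ρ : ∀ v : V, A.carrier (sortOf v)) : ∀ {s : S}, Term F V sortOf s → A.carrier s
  | _, .var v => ρ v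
  | _, .app f ts => A.interp f (fun i => Term.eval A ρ (ts i))

/-- A derived signature: symbols are first-order terms over `F`. -/
structure DerSig {S : Type} (F : Sig S) : Type 1 where
  Sym : Type
  args : Sym → List S
  res : Sym → S
  term : ∀ d : Sym, Term F (Fin (args d).length) (fun i => (args d).get i) (res d)

def DerSig.toSig {S : Type} {F : Sig S} (D : DerSig F) : Sig S :=
  ⟨D.Sym, D.args, D.res⟩

/-- The derived algebra of `A` given by a derived signature `D`: same sorts and
universes, operations are the interpretations in `A` of the terms of `D`. -/
def derivedAlg {S : Type} {F : Sig S} (A : Alg F) (D : DerSig F) : Alg D.toSig where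
  carrier := A.carrier
  interp f as := (D.term f).eval A as

/-- Subalgebras: restrict the sorts, the signature and the universes. -/
structure SubAlg {S : Type} {F : Sig S} (A : Alg F) : Type 1 where
  sorts : Set S
  syms : Set F.Sym
  argsMem : ∀ f ∈ syms, ∀ s ∈ F.args f, s ∈ sorts
  resMem : ∀ f ∈ syms, F.res f ∈ sorts
  carrier : ∀ s : S, Set (A.carrier s)
  empty_outside : ∀ s ∉ sorts, carrier s = ∅
  closed : ∀ (f : F.Sym), f ∈ syms →
    ∀ as : (i : Fin (F.args f).length) → A.carrier ((F.args f).get i),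
    (∀ i, as i ∈ carrier _) → A.interp f as ∈ carrier _

def SubAlg.sig {S : Type} {F : Sig S} {A : Alg F} (B : SubAlg A) : Sig S :=
  ⟨{f : F.Sym // f ∈ B.syms}, fun f => F.args f.1, fun f => F.res f.1⟩

def SubAlg.alg {S : Type} {F : Sig S} {A : Alg F} (B : SubAlg A) : Alg B.sig where
  carrier s := {a : A.carrier s // a ∈ B.carrier s}
  interp f as :=
    ⟨A.interp f.1 (fun i => (as i).1), B.closed f.1 f.2 _ (fun i => (as i).2)⟩

/-- Congruences of a multi-sorted algebra. -/
structure Cong {S : Type} {F : Sig S} (A : Alg F) : Type 1 where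
  rel : ∀ s, A.carrier s → A.carrier s → Prop
  iseqv : ∀ s, Equivalence (rel s)
  compat : ∀ (f : F.Sym)
    (as bs : (i : Fin (F.args f).length) → A.carrier ((F.args f).get i)),
    (∀ i, rel _ (as i) (bs i)) → rel _ (A.interp f as) (A.interp f bs)

/-- A sorted relation saturates `L` if `L` is a union of its classes. -/
def Saturates {S : Type} {F : Sig S} {A : Alg F}
    (r : ∀ s, A.carrier s → A.carrier s → Prop) (L : Set (Univ A)) : Prop :=
  ∀ s a b, r s a b → ((⟨s, a⟩ : Univ A) ∈ L ↔ (⟨s, b⟩ : Univ A) ∈ L)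

/-- A sorted relation is locally finite if it has finitely many classes of each sort. -/
def LocFinRel {S : Type} {F : Sig S} {A : Alg F}
    (r : ∀ s, A.carrier s → A.carrier s → Prop) : Prop :=
  ∀ s, Finite (Quot (r s))

/-- `L` is recognizable iff some locally finite congruence saturates it. -/
def RecogC {S : Type} {F : Sig S} (A : Alg F) (L : Set (Univ A)) : Prop :=
  ∃ C : Cong A, Saturates C.rel L ∧ LocFinRel C.rel

/-- Extension of an assignment `c` of the variables `some v` by the value `a`
for the distinguished variable `none` (of sort `s`). -/
def extAsgn {S : Type} {F : Sig S} (A : Alg F) {V : Type} {sortOf : Option V → S} {s : S}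
    (hx : sortOf none = s) (a : A.carrier s) (c : ∀ v : V, A.carrier (sortOf (some v))) :
    ∀ v : Option V, A.carrier (sortOf v)
  | none => cast (congrArg A.carrier hx.symm) a
  | some v => c v

/-- The syntactic congruence of `L` in `A`: `a` and `b` (of the same sort) are
related iff for every first-order term `t(x, y₁, …)` and every assignment `c`
of the parameter variables, `t(a, c̄) ∈ L ⟺ t(b, c̄) ∈ L`. -/
def SynCong {S : Type} {F : Sig S} (A : Alg F) (L : Set (Univ A)) (s : S)
    (a b : A.carrier s) : Prop :=
  ∀ (V : Type) (sortOf : Option V → S) (hx : sortOf none = s) (s' : S)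
    (t : Term F (Option V) sortOf s') (c : ∀ v : V, A.carrier (sortOf (some v))),
    ((⟨s', t.eval A (extAsgn A hx a c)⟩ : Univ A) ∈ L ↔
     (⟨s', t.eval A (extAsgn A hx b c)⟩ : Univ A) ∈ L)

/-! A homomorphism commutes with the evaluation of terms, so a homomorphism `A → B` is, with the
same underlying maps, a homomorphism between the derived algebras of `A` and `B` by the same
terms. The derived algebra of `B` has the universes of `B`, hence is locally finite, and the same
set `C` recognizes `L`. -/

section Derived

variable {S : Type} {F : Sig S}

theorem Hom.map_eval {A B : Alg F} (h : Hom A B)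
    {V : Type} {sortOf : V → S} (ρ : ∀ v : V, A.carrier (sortOf v)) :
    ∀ {s : S} (t : Term F V sortOf s),
      h.toFun s (t.eval A ρ) = t.eval B (fun v => h.toFun _ (ρ v))
  | _, .var _ => rfl
  | _, .app f ts => by
      simp only [Term.eval, h.map]
      congr 1
      funext i
      exact h.map_eval ρ (ts i)

def Hom.derived {A B : Alg F} (h : Hom A B) (D : DerSig F) :
    Hom (derivedAlg A D) (derivedAlg B D) where
  toFun := h.toFun
  map f as := h.map_eval as (D.term f)

theorem LocFin.derivedAlg {B : Alg F} (hB : LocFin B) (D : DerSig F) :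
    LocFin (derivedAlg B D) :=
  hB

end Derived

/-- If `D` is a derived algebra of a multi-sorted algebra `A`, then
every subset `L` of the universe of `A` that is recognizable in `A` is also
recognizable in `D`. -/
theorem recognizable_in_derived_algebra {S : Type} {F : Sig S} (A : Alg F) (D : DerSig F)
    (L : Set (Univ A)) (h : Recog A L) : Recog (derivedAlg A D) L := by
  obtain ⟨B, hB, hom, C, hL⟩ := h
  exact ⟨derivedAlg B D, hB.derivedAlg D, hom.derived D, C, hL⟩

end MSAlg
end

section
/- For every finite sort τ of source labels, every graph that is the value of a ground term over the τ-restricted hyperedge-replacement signature has tree-width at most |τ| − 1. -/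
set_option autoImplicit false

namespace GraphCF

noncomputable section

/-! ### Concrete graphs

A concrete graph over an alphabet `Lab` of edge labels (with arities `ar`):
vertices `Fin n`, edges `Fin m`, each edge carrying a label and the sequence of
attached vertices, and an assignment of the source labels in the sort `srt`
(a finite set of natural numbers) to vertices.  Graphs in the paper are
isomorphism classes of concrete graphs; we work with concrete graphs together
with the isomorphism relation `GIso`. -/
structure CG (Lab : Type) (ar : Lab → ℕ) : Type where
  n : ℕ
  m : ℕ
  edg : Fin m → (a : Lab) × (Fin (ar a) → Fin n)
  srt : Finset ℕ
  src : {s : ℕ // s ∈ srt} → Fin n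

variable {Lab : Type} {ar : Lab → ℕ}

instance quotFinite {α : Type} [Finite α] (r : α → α → Prop) : Finite (Quot r) :=
  Finite.of_surjective (Quot.mk r) fun q => Quot.exists_rep q

/-- The graph `0_τ` consisting only of sources, one for each label in `τ`. -/
def czero (τ : Finset ℕ) : CG Lab ar where
  n := τ.card
  m := 0
  edg e := Fin.elim0 e
  srt := τ
  src s := τ.equivFin ⟨s.1, s.2⟩

/-- The single-edge graph `a_(s₁,…,s_k)`. -/
def cedge (a : Lab) (s : Fin (ar a) → ℕ) : CG Lab ar where
  n := (Finset.image s Finset.univ).card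
  m := 1
  edg _ := ⟨a, fun i => (Finset.image s Finset.univ).equivFin
    ⟨s i, Finset.mem_image_of_mem s (Finset.mem_univ i)⟩⟩
  srt := Finset.image s Finset.univ
  src t := (Finset.image s Finset.univ).equivFin ⟨t.1, t.2⟩

/-- Restriction of sources: keep only the source labels in `τ`. -/
def crestrict (τ : Finset ℕ) (G : CG Lab ar) : CG Lab ar where
  n := G.n
  m := G.m
  edg := G.edg
  srt := G.srt ∩ τ
  src s := G.src ⟨s.1, (Finset.mem_inter.mp s.2).1⟩

/-- Renaming of sources along a permutation `α`; the new sort is `α⁻¹(srt)`. -/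
def crename (α : Equiv.Perm ℕ) (G : CG Lab ar) : CG Lab ar where
  n := G.n
  m := G.m
  edg := G.edg
  srt := G.srt.image (α.symm : ℕ → ℕ)
  src s := G.src ⟨α s.1, by
    obtain ⟨y, hy, he⟩ := Finset.mem_image.mp s.2
    rw [← he, Equiv.apply_symm_apply]
    exact hy⟩

/-- The fusion relation used to define parallel composition: sources of the two
graphs carrying the same label are identified. -/
def fuseRel (G₁ G₂ : CG Lab ar) :
    (Fin G₁.n ⊕ Fin G₂.n) → (Fin G₁.n ⊕ Fin G₂.n) → Prop :=
  fun x y => ∃ (s : ℕ) (h₁ : s ∈ G₁.srt) (h₂ : s ∈ G₂.srt),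
    x = Sum.inl (G₁.src ⟨s, h₁⟩) ∧ y = Sum.inr (G₂.src ⟨s, h₂⟩)

/-- Parallel composition `G₁ ∥ G₂`: disjoint union with fusion of equally
labeled sources; the sort is the union of the sorts. -/
def ccomp (G₁ G₂ : CG Lab ar) : CG Lab ar :=
  let e := Finite.equivFin (Quot (fuseRel G₁ G₂))
  { n := Nat.card (Quot (fuseRel G₁ G₂))
    m := G₁.m + G₂.m
    edg := fun i =>
      match finSumFinEquiv.symm i with
      | Sum.inl e₁ => ⟨(G₁.edg e₁).1, fun j => e (Quot.mk _ (Sum.inl ((G₁.edg e₁).2 j)))⟩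
      | Sum.inr e₂ => ⟨(G₂.edg e₂).1, fun j => e (Quot.mk _ (Sum.inr ((G₂.edg e₂).2 j)))⟩
    srt := G₁.srt ∪ G₂.srt
    src := fun s =>
      if h : s.1 ∈ G₁.srt then e (Quot.mk _ (Sum.inl (G₁.src ⟨s.1, h⟩)))
      else e (Quot.mk _ (Sum.inr (G₂.src ⟨s.1, (Finset.mem_union.mp s.2).resolve_left h⟩))) }

theorem crestrict_srt (τ : Finset ℕ) (G : CG Lab ar) :
    (crestrict τ G).srt = G.srt ∩ τ := rfl

theorem crename_srt (α : Equiv.Perm ℕ) (G : CG Lab ar) :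
    (crename α G).srt = G.srt.image (α.symm : ℕ → ℕ) := rfl

theorem ccomp_srt (G₁ G₂ : CG Lab ar) : (ccomp G₁ G₂).srt = G₁.srt ∪ G₂.srt := rfl

/-- Isomorphism of concrete graphs. -/
def GIso (G₁ G₂ : CG Lab ar) : Prop :=
  G₁.srt = G₂.srt ∧
  ∃ (ev : Fin G₁.n ≃ Fin G₂.n) (ee : Fin G₁.m ≃ Fin G₂.m),
    (∀ e, (G₂.edg (ee e)).1 = (G₁.edg e).1 ∧
      HEq (G₂.edg (ee e)).2 (fun i => ev ((G₁.edg e).2 i))) ∧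
    (∀ (s : ℕ) (h₁ : s ∈ G₁.srt) (h₂ : s ∈ G₂.srt),
      ev (G₁.src ⟨s, h₁⟩) = G₂.src ⟨s, h₂⟩)

def IsoClosed (L : Set (CG Lab ar)) : Prop :=
  ∀ G₁ G₂ : CG Lab ar, GIso G₁ G₂ → G₁ ∈ L → G₂ ∈ L

def isoClosure (L : Set (CG Lab ar)) : Set (CG Lab ar) :=
  {G | ∃ G' ∈ L, GIso G' G}

/-- `α` is a `τ`-permutation: it fixes every label outside `τ`. -/
def IsTauPerm (τ : Finset ℕ) (α : Equiv.Perm ℕ) : Prop := ∀ x, x ∉ τ → α x = x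

/-- Finite permutations of the source labels. -/
def IsFinPerm (α : Equiv.Perm ℕ) : Prop := ∃ τ : Finset ℕ, IsTauPerm τ α

theorem crename_srt_subset {τ : Finset ℕ} {α : Equiv.Perm ℕ} (hα : IsTauPerm τ α)
    {G : CG Lab ar} (h : G.srt ⊆ τ) : (crename α G).srt ⊆ τ := by
  intro x hx
  obtain ⟨y, hy, he⟩ := Finset.mem_image.mp hx
  subst he
  by_contra hc
  have h1 := hα _ hc
  rw [Equiv.apply_symm_apply] at h1
  exact hc (h1 ▸ h hy)

/-! ### Ground HR terms -/

/-- Ground terms over the HR signature. -/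
inductive HRT (Lab : Type) (ar : Lab → ℕ) : Type
  | zero (τ : Finset ℕ)
  | edge (a : Lab) (s : Fin (ar a) → ℕ)
  | restrict (τ : Finset ℕ) (t : HRT Lab ar)
  | rename (α : Equiv.Perm ℕ) (hα : IsFinPerm α) (t : HRT Lab ar)
  | comp (t₁ t₂ : HRT Lab ar)

/-- The value of a ground HR term in the graph algebra. -/
def HRT.val : HRT Lab ar → CG Lab ar
  | .zero τ => czero τ
  | .edge a s => cedge a s
  | .restrict τ t => crestrict τ t.val
  | .rename α _ t => crename α t.val
  | .comp t₁ t₂ => ccomp t₁.val t₂.val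

/-- The term uses only source labels from `τ`. -/
def HRT.usesOnly (τ : Finset ℕ) : HRT Lab ar → Prop
  | .zero τ' => τ' ⊆ τ
  | .edge _ s => ∀ i, s i ∈ τ
  | .restrict τ' t => τ' ⊆ τ ∧ t.usesOnly τ
  | .rename α _ t => IsTauPerm τ α ∧ t.usesOnly τ
  | .comp t₁ t₂ => t₁.usesOnly τ ∧ t₂.usesOnly τ

/-- The set of graphs generated by ground terms over the `τ`-restricted
HR signature (up to isomorphism). -/
def genGraphs (Lab : Type) (ar : Lab → ℕ) (τ : Finset ℕ) : Set (CG Lab ar) :=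
  {G | ∃ t : HRT Lab ar, t.usesOnly τ ∧ GIso t.val G}

/-! ### HR grammars -/

/-- HR terms with nonterminal (set) variables from `N`. -/
inductive HRTV (Lab : Type) (ar : Lab → ℕ) (N : Type) : Type
  | var (X : N)
  | zero (τ : Finset ℕ)
  | edge (a : Lab) (s : Fin (ar a) → ℕ)
  | restrict (τ : Finset ℕ) (t : HRTV Lab ar N)
  | rename (α : Equiv.Perm ℕ) (hα : IsFinPerm α) (t : HRTV Lab ar N)
  | comp (t₁ t₂ : HRTV Lab ar N)

/-- Evaluation of a term with set variables, with regard to an assignment `S`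
of sets of graphs to the nonterminals. -/
def HRTV.evalSet {N : Type} (S : N → Set (CG Lab ar)) : HRTV Lab ar N → Set (CG Lab ar)
  | .var X => S X
  | .zero τ => {czero τ}
  | .edge a s => {cedge a s}
  | .restrict τ t => crestrict τ '' t.evalSet S
  | .rename α _ t => crename α '' t.evalSet S
  | .comp t₁ t₂ => {G | ∃ G₁ ∈ t₁.evalSet S, ∃ G₂ ∈ t₂.evalSet S, G = ccomp G₁ G₂}

def HRTV.usesOnly {N : Type} (τ : Finset ℕ) : HRTV Lab ar N → Prop
  | .var _ => True
  | .zero τ' => τ' ⊆ τ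
  | .edge _ s => ∀ i, s i ∈ τ
  | .restrict τ' t => τ' ⊆ τ ∧ t.usesOnly τ
  | .rename α _ t => IsTauPerm τ α ∧ t.usesOnly τ
  | .comp t₁ t₂ => t₁.usesOnly τ ∧ t₂.usesOnly τ

/-- A grammar: a finite list of rules `X → t`. -/
abbrev Grammar (Lab : Type) (ar : Lab → ℕ) (N : Type) : Type := List (N × HRTV Lab ar N)

def IsSolution {N : Type} (Γ : Grammar Lab ar N) (S : N → Set (CG Lab ar)) : Prop :=
  ∀ r ∈ Γ, HRTV.evalSet S r.2 ⊆ S r.1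

/-- The component of the least solution of `Γ` at the nonterminal `X`
(the least solution is the pointwise intersection of all solutions). -/
def langOf {N : Type} (Γ : Grammar Lab ar N) (X : N) : Set (CG Lab ar) :=
  {G | ∀ S : N → Set (CG Lab ar), IsSolution Γ S → G ∈ S X}

/-- `L` is context-free for a grammar over the `τ`-restricted HR signature. -/
def ContextFreeT (Lab : Type) (ar : Lab → ℕ) (τ : Finset ℕ) (L : Set (CG Lab ar)) : Prop :=
  ∃ (N : Type) (_ : Finite N) (Γ : Grammar Lab ar N) (X : N),
    (∀ r ∈ Γ, HRTV.usesOnly τ r.2) ∧ L = isoClosure (langOf Γ X)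

/-- `L` is context-free: a component of the least solution of a grammar of
recursive equations over HR operations. -/
def ContextFree (Lab : Type) (ar : Lab → ℕ) (L : Set (CG Lab ar)) : Prop :=
  ∃ (N : Type) (_ : Finite N) (Γ : Grammar Lab ar N) (X : N),
    L = isoClosure (langOf Γ X)

/-! ### Contexts and the syntactic congruence of the HR algebra -/

/-- First-order HR contexts: terms built from a variable (`hole`), arbitrary
graph parameters (`const`) and the HR operations. -/
inductive HRCtx (Lab : Type) (ar : Lab → ℕ) : Type
  | hole
  | const (G : CG Lab ar)
  | zero (τ : Finset ℕ)
  | edge (a : Lab) (s : Fin (ar a) → ℕ)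
  | restrict (τ : Finset ℕ) (c : HRCtx Lab ar)
  | rename (α : Equiv.Perm ℕ) (hα : IsFinPerm α) (c : HRCtx Lab ar)
  | comp (c₁ c₂ : HRCtx Lab ar)

def HRCtx.apply : HRCtx Lab ar → CG Lab ar → CG Lab ar
  | .hole, G => G
  | .const H, _ => H
  | .zero τ, _ => czero τ
  | .edge a s, _ => cedge a s
  | .restrict τ c, G => crestrict τ (c.apply G)
  | .rename α _ c, G => crename α (c.apply G)
  | .comp c₁ c₂, G => ccomp (c₁.apply G) (c₂.apply G)

/-- The syntactic congruence of `L` in the HR graph algebra. -/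
def SynCongHR (L : Set (CG Lab ar)) (G₁ G₂ : CG Lab ar) : Prop :=
  G₁.srt = G₂.srt ∧ ∀ c : HRCtx Lab ar, (c.apply G₁ ∈ L ↔ c.apply G₂ ∈ L)

/-- The context uses only source labels from `τ` (and parameters of sort `⊆ τ`). -/
def HRCtx.usesOnly (τ : Finset ℕ) : HRCtx Lab ar → Prop
  | .hole => True
  | .const G => G.srt ⊆ τ
  | .zero τ' => τ' ⊆ τ
  | .edge _ s => ∀ i, s i ∈ τ
  | .restrict τ' c => τ' ⊆ τ ∧ c.usesOnly τ
  | .rename α _ c => IsTauPerm τ α ∧ c.usesOnly τ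
  | .comp c₁ c₂ => c₁.usesOnly τ ∧ c₂.usesOnly τ

/-- The syntactic congruence of `L` in the finitely-sorted subalgebra `G^τ`. -/
def SynCongHRT (τ : Finset ℕ) (L : Set (CG Lab ar)) (G₁ G₂ : CG Lab ar) : Prop :=
  G₁.srt = G₂.srt ∧
  ∀ c : HRCtx Lab ar, c.usesOnly τ → (c.apply G₁ ∈ L ↔ c.apply G₂ ∈ L)

/-! ### Congruence-based recognizability in the HR algebra -/

/-- A congruence of the HR graph algebra (on concrete graphs; it must contain
graph isomorphism, respect sorts and be compatible with all HR operations). -/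
structure HRCongruence (Lab : Type) (ar : Lab → ℕ) : Type 1 where
  rel : CG Lab ar → CG Lab ar → Prop
  iseqv : Equivalence rel
  iso_le : ∀ G₁ G₂, GIso G₁ G₂ → rel G₁ G₂
  srt_eq : ∀ G₁ G₂, rel G₁ G₂ → G₁.srt = G₂.srt
  restrict_compat : ∀ (τ : Finset ℕ) G₁ G₂, rel G₁ G₂ →
    rel (crestrict τ G₁) (crestrict τ G₂)
  rename_compat : ∀ (α : Equiv.Perm ℕ), IsFinPerm α → ∀ G₁ G₂, rel G₁ G₂ →
    rel (crename α G₁) (crename α G₂)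
  comp_compat : ∀ G₁ G₂ H₁ H₂, rel G₁ H₁ → rel G₂ H₂ →
    rel (ccomp G₁ G₂) (ccomp H₁ H₂)

/-- Locally finite: finitely many classes of each sort. -/
def HRCongruence.LocFin (C : HRCongruence Lab ar) : Prop :=
  ∀ τ : Finset ℕ,
    Finite (Quot (fun a b : {G : CG Lab ar // G.srt = τ} => C.rel a.1 b.1))

def HRCongruence.Saturates (C : HRCongruence Lab ar) (L : Set (CG Lab ar)) : Prop :=
  ∀ G₁ G₂, C.rel G₁ G₂ → (G₁ ∈ L ↔ G₂ ∈ L)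

/-- `L` is recognizable in the HR graph algebra: saturated by a locally finite
congruence. -/
def RecogHR (L : Set (CG Lab ar)) : Prop :=
  ∃ C : HRCongruence Lab ar, C.Saturates L ∧ C.LocFin

/-- graphs of sort included in `τ` -/
abbrev CGT (Lab : Type) (ar : Lab → ℕ) (τ : Finset ℕ) : Type :=
  {G : CG Lab ar // G.srt ⊆ τ}

def subRestrict {τ : Finset ℕ} (τ' : Finset ℕ) (G : CGT Lab ar τ) : CGT Lab ar τ :=
  ⟨crestrict τ' G.1, by rw [crestrict_srt]; exact Finset.Subset.trans Finset.inter_subset_left G.2⟩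

def subRename {τ : Finset ℕ} (α : Equiv.Perm ℕ) (hα : IsTauPerm τ α)
    (G : CGT Lab ar τ) : CGT Lab ar τ :=
  ⟨crename α G.1, crename_srt_subset hα G.2⟩

def subComp {τ : Finset ℕ} (G₁ G₂ : CGT Lab ar τ) : CGT Lab ar τ :=
  ⟨ccomp G₁.1 G₂.1, by rw [ccomp_srt]; exact Finset.union_subset G₁.2 G₂.2⟩

/-- A congruence of the finitely-sorted subalgebra `G^τ`. -/
structure HRCongruenceT (Lab : Type) (ar : Lab → ℕ) (τ : Finset ℕ) : Type 1 where
  rel : CGT Lab ar τ → CGT Lab ar τ → Prop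
  iseqv : Equivalence rel
  iso_le : ∀ G₁ G₂ : CGT Lab ar τ, GIso G₁.1 G₂.1 → rel G₁ G₂
  srt_eq : ∀ G₁ G₂ : CGT Lab ar τ, rel G₁ G₂ → G₁.1.srt = G₂.1.srt
  restrict_compat : ∀ (τ' : Finset ℕ), τ' ⊆ τ → ∀ G₁ G₂, rel G₁ G₂ →
    rel (subRestrict τ' G₁) (subRestrict τ' G₂)
  rename_compat : ∀ (α : Equiv.Perm ℕ) (hα : IsTauPerm τ α), ∀ G₁ G₂, rel G₁ G₂ →
    rel (subRename α hα G₁) (subRename α hα G₂)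
  comp_compat : ∀ G₁ G₂ H₁ H₂, rel G₁ H₁ → rel G₂ H₂ →
    rel (subComp G₁ G₂) (subComp H₁ H₂)

/-- `L` is recognizable in the finitely-sorted subalgebra `G^τ`: saturated by a
congruence of `G^τ` with finitely many classes. -/
def RecogHRT (τ : Finset ℕ) (L : Set (CG Lab ar)) : Prop :=
  ∃ C : HRCongruenceT Lab ar τ,
    (∀ G₁ G₂ : CGT Lab ar τ, C.rel G₁ G₂ → (G₁.1 ∈ L ↔ G₂.1 ∈ L)) ∧
    Finite (Quot C.rel)

/-! ### Tree decompositions and tree-width -/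

/-- A tree decomposition of a concrete graph `G`. -/
structure TreeDecomp (G : CG Lab ar) : Type 1 where
  ι : Type
  finι : Finite ι
  T : SimpleGraph ι
  isTree : T.IsTree
  root : ι
  bag : ι → Finset (Fin G.n)
  edges_covered : ∀ e : Fin G.m, ∃ x : ι, ∀ i, (G.edg e).2 i ∈ bag x
  vert_connected : ∀ v : Fin G.n, (T.induce {x : ι | v ∈ bag x}).Connected
  root_bag : ∀ s : {s : ℕ // s ∈ G.srt}, G.src s ∈ bag root

/-- `G` has tree-width at most `k`: it has a tree decomposition all of whose
bags have at most `k+1` elements. -/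
def TWle (G : CG Lab ar) (k : ℕ) : Prop :=
  ∃ td : TreeDecomp G, ∀ x, (td.bag x).card ≤ k + 1

/-! ### Trees -/

/-- Terms denoting trees over an alphabet `B1` of unary and `B2` of binary
edge labels: constants for unary labels, the `append` operations for binary
labels, and root-fusing composition. -/
inductive TTerm (B1 B2 : Type) : Type
  | leaf (c : B1)
  | append (b : B2) (t : TTerm B1 B2)
  | comp (t₁ t₂ : TTerm B1 B2)

/-- Arity function for tree edge labels. -/
def tAr {B1 B2 : Type} : B1 ⊕ B2 → ℕ := Sum.elim (fun _ => 1) (fun _ => 2)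

/-- The tree (as a graph with root source `0`) denoted by a tree term. -/
def treeEval {B1 B2 : Type} : TTerm B1 B2 → CG (B1 ⊕ B2) tAr
  | .leaf c => cedge (Sum.inl c) (fun _ => 0)
  | .append b t => crename (Equiv.swap 0 1)
      (crestrict {1} (ccomp (cedge (Sum.inr b) ![1, 0]) (treeEval t)))
  | .comp t₁ t₂ => ccomp (treeEval t₁) (treeEval t₂)

/-- Two tree terms denote the same tree. -/
def SameTree {B1 B2 : Type} (t u : TTerm B1 B2) : Prop :=
  GIso (treeEval t) (treeEval u)

/-- The height of (the tree denoted by) a tree term. -/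
def TTerm.height {B1 B2 : Type} : TTerm B1 B2 → ℕ
  | .leaf _ => 0
  | .append _ t => t.height + 1
  | .comp t₁ t₂ => max t₁.height t₂.height

/-- Iterated composition `x ∥ l₁ ∥ … ∥ l_n`. -/
def compList {B1 B2 : Type} (x : TTerm B1 B2) (l : List (TTerm B1 B2)) : TTerm B1 B2 :=
  l.foldl TTerm.comp x

/-- Equality of tree terms up to commutativity and associativity of `∥`. -/
inductive ACeq {B1 B2 : Type} : TTerm B1 B2 → TTerm B1 B2 → Prop
  | refl (t) : ACeq t t
  | symm {t u} : ACeq t u → ACeq u t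
  | trans {t u v} : ACeq t u → ACeq u v → ACeq t v
  | comm (t u) : ACeq (.comp t u) (.comp u t)
  | assoc (t u v) : ACeq (.comp (.comp t u) v) (.comp t (.comp u v))
  | congr_append (b) {t u} : ACeq t u → ACeq (.append b t) (.append b u)
  | congr_comp {t u t' u'} : ACeq t t' → ACeq u u' → ACeq (.comp t u) (.comp t' u')

/-! ### Parse trees -/

/-- Unary parse-tree edge labels: the HR constants. -/
inductive PUn (Lab : Type) (ar : Lab → ℕ) : Type
  | zero (τ : Finset ℕ)
  | edge (a : Lab) (s : Fin (ar a) → ℕ)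

/-- Binary parse-tree edge labels: restriction and renaming. -/
inductive PBin : Type
  | restrict (τ : Finset ℕ)
  | rename (α : Equiv.Perm ℕ) (hα : IsFinPerm α)

/-- Parse trees (as tree terms over the parse alphabet). -/
abbrev PTerm (Lab : Type) (ar : Lab → ℕ) : Type := TTerm (PUn Lab ar) PBin

/-- The canonical evaluation of a parse tree: interpret the edge labels as HR
operations in the graph algebra. -/
def pval : PTerm Lab ar → CG Lab ar
  | .leaf (.zero τ) => czero τ
  | .leaf (.edge a s) => cedge a s
  | .append (.restrict τ) t => crestrict τ (pval t)
  | .append (.rename α _) t => crename α (pval t)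
  | .comp t₁ t₂ => ccomp (pval t₁) (pval t₂)

/-- The unary parse label uses only sources from `τ`. -/
def PUnOK (τ : Finset ℕ) : PUn Lab ar → Prop
  | .zero τ' => τ' ⊆ τ
  | .edge _ s => ∀ i, s i ∈ τ

/-- The binary parse label uses only sources from `τ`. -/
def PBinOK (τ : Finset ℕ) : PBin → Prop
  | .restrict τ' => τ' ⊆ τ
  | .rename α _ => IsTauPerm τ α

/-- The `τ`-restricted parse alphabet (unary part). -/
abbrev PUnT (Lab : Type) (ar : Lab → ℕ) (τ : Finset ℕ) : Type := {u : PUn Lab ar // PUnOK τ u}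
/-- The `τ`-restricted parse alphabet (binary part). -/
abbrev PBinT (τ : Finset ℕ) : Type := {b : PBin // PBinOK τ b}
/-- Parse trees over the `τ`-restricted parse alphabet. -/
abbrev PTermT (Lab : Type) (ar : Lab → ℕ) (τ : Finset ℕ) : Type :=
  TTerm (PUnT Lab ar τ) (PBinT τ)

/-- Relabeling of tree terms. -/
def TTerm.mapL {B1 B2 B1' B2' : Type} (f : B1 → B1') (g : B2 → B2') :
    TTerm B1 B2 → TTerm B1' B2'
  | .leaf c => .leaf (f c)
  | .append b t => .append (g b) (t.mapL f g)
  | .comp t₁ t₂ => .comp (t₁.mapL f g) (t₂.mapL f g)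

/-- Inclusion of `τ`-restricted parse trees into all parse trees. -/
def ptInj {τ : Finset ℕ} (t : PTermT Lab ar τ) : PTerm Lab ar :=
  t.mapL Subtype.val Subtype.val

/-! ### Recognizability for sets of (parse) trees -/

/-- A congruence of the tree algebra `T(B_parse)` (over the universe of parse
trees): contains `SameTree` and is compatible with all tree operations. -/
structure TCong (B1 B2 : Type) : Type 1 where
  rel : TTerm B1 B2 → TTerm B1 B2 → Prop
  iseqv : Equivalence rel
  same_le : ∀ t u, SameTree t u → rel t u
  append_compat : ∀ (b : B2) t u, rel t u → rel (.append b t) (.append b u)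
  comp_compat : ∀ t₁ t₂ u₁ u₂, rel t₁ u₁ → rel t₂ u₂ →
    rel (.comp t₁ t₂) (.comp u₁ u₂)

/-- `K` is recognizable in the tree algebra. -/
def RecogTree {B1 B2 : Type} (K : Set (TTerm B1 B2)) : Prop :=
  ∃ C : TCong B1 B2, (∀ t u, C.rel t u → (t ∈ K ↔ u ∈ K)) ∧ Finite (Quot C.rel)

/-- A congruence of the algebra of parse trees `P` (the HR signature
interpreted over trees): contains `SameTree` and is compatible with the
HR operations on trees. -/
structure PCong (Lab : Type) (ar : Lab → ℕ) : Type 1 where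
  rel : PTerm Lab ar → PTerm Lab ar → Prop
  iseqv : Equivalence rel
  same_le : ∀ t u, SameTree t u → rel t u
  restrict_compat : ∀ (τ : Finset ℕ) t u, rel t u →
    rel (.append (PBin.restrict τ) t) (.append (PBin.restrict τ) u)
  rename_compat : ∀ (α : Equiv.Perm ℕ) (hα : IsFinPerm α) t u, rel t u →
    rel (.append (PBin.rename α hα) t) (.append (PBin.rename α hα) u)
  comp_compat : ∀ t₁ t₂ u₁ u₂, rel t₁ u₁ → rel t₂ u₂ →
    rel (.comp t₁ t₂) (.comp u₁ u₂)

/-- `K` is recognizable in the algebra of parse trees. -/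
def RecogP (K : Set (PTerm Lab ar)) : Prop :=
  ∃ C : PCong Lab ar, (∀ t u, C.rel t u → (t ∈ K ↔ u ∈ K)) ∧ Finite (Quot C.rel)

end

end GraphCF

/-! By induction on the term. A graph with at most `k` vertices has the decomposition with a
single bag. Restriction and renaming only change the source labelling, so the decomposition of
the argument can be reused. For `G₁ ∥ G₂`, hang the decompositions of `G₁` and `G₂` (whose root
bags contain their sources) below a new root whose bag is the set of all sources, and push every
bag forward along the fusion map of `∥`. Only sources get fused, and they all meet in the new
root, so the bags containing a given vertex still form a subtree. The new root bag has at most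
`|sort(G₁) ∪ sort(G₂)| ≤ |τ|` elements. -/

namespace SimpleGraph

variable {V W : Type*} {G : SimpleGraph V} {H : SimpleGraph W}

theorem Reachable.map_of_adj_reachable {u v : V} (f : V → W)
    (hf : ∀ a b, G.Adj a b → H.Reachable (f a) (f b)) (h : G.Reachable u v) :
    H.Reachable (f u) (f v) := by
  rw [reachable_iff_reflTransGen] at h ⊢
  exact h.lift' f fun a b hab => (reachable_iff_reflTransGen _ _).mp (hf a b hab)

@[simp] theorem reachable_sum_inl_iff {a b : V} :
    (G ⊕g H).Reachable (.inl a) (.inl b) ↔ G.Reachable a b := by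
  refine ⟨fun h => h.map_of_adj_reachable (Sum.elim id fun _ => a) ?_,
    fun h => h.map Embedding.sumInl.toHom⟩
  rintro (c | c) (d | d) hcd <;> simp at hcd
  exacts [hcd.reachable, .rfl]

@[simp] theorem reachable_sum_inr_iff {a b : W} :
    (G ⊕g H).Reachable (.inr a) (.inr b) ↔ H.Reachable a b := by
  refine ⟨fun h => h.map_of_adj_reachable (Sum.elim (fun _ => a) id) ?_,
    fun h => h.map Embedding.sumInr.toHom⟩
  rintro (c | c) (d | d) hcd <;> simp at hcd
  exacts [.rfl, hcd.reachable]

theorem sum_deleteEdges_inl (a b : V) :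
    (G ⊕g H).deleteEdges {s(.inl a, .inl b)} = G.deleteEdges {s(a, b)} ⊕g H := by
  ext (c | c) (d | d) <;> simp

theorem sum_deleteEdges_inr (a b : W) :
    (G ⊕g H).deleteEdges {s(.inr a, .inr b)} = G ⊕g H.deleteEdges {s(a, b)} := by
  ext (c | c) (d | d) <;> simp

theorem IsAcyclic.sum (hG : G.IsAcyclic) (hH : H.IsAcyclic) : (G ⊕g H).IsAcyclic := by
  rw [isAcyclic_iff_forall_adj_isBridge] at hG hH ⊢
  rintro (a | a) (b | b) hab
  · rw [isBridge_iff, sum_deleteEdges_inl, reachable_sum_inl_iff]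
    exact hG (sum_adj_inl.mp hab)
  · exact absurd hab (not_adj_sum_inl_inr a b)
  · exact absurd hab.symm (not_adj_sum_inl_inr b a)
  · rw [isBridge_iff, sum_deleteEdges_inr, reachable_sum_inr_iff]
    exact hH (sum_adj_inr.mp hab)

theorem IsTree.sum_sup_edge (hG : G.IsTree) (hH : H.IsTree) (v : V) (w : W) :
    (G.sum H ⊔ edge (Sum.inl v) (Sum.inr w)).IsTree :=
  ⟨hG.connected.sum_sup_edge hH.connected,
    (hG.isAcyclic.sum hH.isAcyclic).sup_edge_of_not_reachable (not_reachable_sum_inl_inr v w)⟩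

theorem Preconnected.induce_sum_sup_edge {s : Set (V ⊕ W)} {v : V} {w : W}
    (hG : (G.induce (Sum.inl ⁻¹' s)).Preconnected)
    (hH : (H.induce (Sum.inr ⁻¹' s)).Preconnected)
    (hsep : ∀ x y, Sum.inl x ∈ s → Sum.inr y ∈ s → Sum.inl v ∈ s ∧ Sum.inr w ∈ s) :
    ((G.sum H ⊔ edge (Sum.inl v) (Sum.inr w)).induce s).Preconnected := by
  set K := G.sum H ⊔ edge (Sum.inl v) (Sum.inr w)
  let φG : G.induce (Sum.inl ⁻¹' s) →g K.induce s :=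
    induceHom ((Hom.ofLE le_sup_left).comp Embedding.sumInl.toHom)
      fun _ (h : Sum.inl _ ∈ s) => h
  let φH : H.induce (Sum.inr ⁻¹' s) →g K.induce s :=
    induceHom ((Hom.ofLE le_sup_left).comp Embedding.sumInr.toHom)
      fun _ (h : Sum.inr _ ∈ s) => h
  have cross : ∀ x y (hx : Sum.inl x ∈ s) (hy : Sum.inr y ∈ s),
      (K.induce s).Reachable ⟨.inl x, hx⟩ ⟨.inr y, hy⟩ := by
    intro x y hx hy
    obtain ⟨hv, hw⟩ := hsep x y hx hy
    have hvw : (K.induce s).Adj ⟨.inl v, hv⟩ ⟨.inr w, hw⟩ := by simp [K, edge]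
    exact ((hG ⟨x, hx⟩ ⟨v, hv⟩).map φG).trans
      (hvw.reachable.trans ((hH ⟨w, hw⟩ ⟨y, hy⟩).map φH))
  rintro ⟨x | x, hx⟩ ⟨y | y, hy⟩
  · exact (hG ⟨x, hx⟩ ⟨y, hy⟩).map φG
  · exact cross x y hx hy
  · exact (cross y x hy hx).symm
  · exact (hH ⟨x, hx⟩ ⟨y, hy⟩).map φH

theorem Preconnected.induce_mem_image {ι V' : Type*} [DecidableEq V'] {T : SimpleGraph ι}
    {bag : ι → Finset V} (hT : ∀ v, (T.induce {x | v ∈ bag x}).Preconnected) (π : V → V')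
    (hπ : ∀ v w, π v = π w → v = w ∨ ∃ x, v ∈ bag x ∧ w ∈ bag x) (v' : V') :
    (T.induce {x | v' ∈ (bag x).image π}).Preconnected := by
  have hsub : ∀ {v}, π v = v' → {x | v ∈ bag x} ⊆ {x | v' ∈ (bag x).image π} :=
    fun hv _ hx => Finset.mem_image.mpr ⟨_, hx, hv⟩
  rintro ⟨x, hx⟩ ⟨y, hy⟩
  obtain ⟨v, hvx, hv⟩ := Finset.mem_image.mp hx
  obtain ⟨w, hwy, hw⟩ := Finset.mem_image.mp hy
  rcases hπ v w (hv.trans hw.symm) with rfl | ⟨z, hvz, hwz⟩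
  · exact (hT v ⟨x, hvx⟩ ⟨y, hwy⟩).map (induceHomOfLE T (hsub hv)).toHom
  · exact ((hT v ⟨x, hvx⟩ ⟨z, hvz⟩).map (induceHomOfLE T (hsub hv)).toHom).trans
      ((hT w ⟨z, hwz⟩ ⟨y, hwy⟩).map (induceHomOfLE T (hsub hw)).toHom)

end SimpleGraph

namespace GraphCF

open SimpleGraph

variable {Lab : Type} {ar : Lab → ℕ}

-- A bound on bag sizes rather than on the width, so that `k = 0` (the empty sort) is covered.
def HasBoundedTreeDecomp (G : CG Lab ar) (k : ℕ) : Prop :=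
  ∃ td : TreeDecomp G, ∀ x, (td.bag x).card ≤ k

theorem hasBoundedTreeDecomp_of_n_le {G : CG Lab ar} {k : ℕ} (h : G.n ≤ k) :
    HasBoundedTreeDecomp G k := by
  refine ⟨{
    ι := Unit
    finι := inferInstance
    T := ⊥
    isTree := .of_subsingleton
    root := ()
    bag := fun _ => Finset.univ
    edges_covered := fun _ => ⟨(), fun _ => Finset.mem_univ _⟩
    vert_connected := fun v => ?_
    root_bag := fun _ => Finset.mem_univ _ }, fun _ => by simpa using h⟩
  have : Nonempty {x : Unit | v ∈ Finset.univ} := ⟨⟨(), Finset.mem_univ v⟩⟩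
  exact .of_subsingleton

theorem HasBoundedTreeDecomp.map {G G' : CG Lab ar} {k : ℕ} (h : HasBoundedTreeDecomp G k)
    (f : Fin G.n → Fin G'.n) (hf : f.Bijective)
    (hedg : ∀ e', ∃ e, ∀ i, (G'.edg e').2 i ∈ Set.range (f ∘ (G.edg e).2))
    (hsrc : ∀ s', ∃ s, G'.src s' = f (G.src s)) :
    HasBoundedTreeDecomp G' k := by
  obtain ⟨td, hbag⟩ := h
  refine ⟨{
    ι := td.ι
    finι := td.finι
    T := td.T
    isTree := td.isTree
    root := td.root
    bag := fun x => (td.bag x).image f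
    edges_covered := fun e' => ?_
    vert_connected := fun v' => ?_
    root_bag := fun s' => ?_ }, fun x => Finset.card_image_le.trans (hbag x)⟩
  · obtain ⟨e, he⟩ := hedg e'
    obtain ⟨x, hx⟩ := td.edges_covered e
    refine ⟨x, fun i => ?_⟩
    obtain ⟨j, hj⟩ := he i
    exact Finset.mem_image.mpr ⟨_, hx j, hj⟩
  · obtain ⟨v, rfl⟩ := hf.2 v'
    obtain ⟨⟨x, hx⟩⟩ := (td.vert_connected v).nonempty
    refine (connected_iff _).mpr ⟨?_, ⟨⟨x, Finset.mem_image_of_mem f hx⟩⟩⟩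
    exact Preconnected.induce_mem_image (fun w => (td.vert_connected w).preconnected) f
      (fun _ _ h => .inl (hf.1 h)) (f v)
  · obtain ⟨s, hs⟩ := hsrc s'
    rw [hs]
    exact Finset.mem_image_of_mem f (td.root_bag s)

theorem HasBoundedTreeDecomp.of_giso {G G' : CG Lab ar} {k : ℕ}
    (h : HasBoundedTreeDecomp G k) (hiso : GIso G G') : HasBoundedTreeDecomp G' k := by
  obtain ⟨hsrt, ev, ee, hedg, hsrc⟩ := hiso
  refine h.map ev ev.bijective (fun e' => ⟨ee.symm e', ?_⟩)
    (fun s' => ⟨⟨s'.1, by rw [hsrt]; exact s'.2⟩, ?_⟩)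
  · obtain ⟨hlab, harg⟩ := hedg (ee.symm e')
    rw [Equiv.apply_symm_apply] at hlab harg
    rw [show G'.edg e' = ⟨_, _⟩ from Sigma.ext hlab harg]
    exact fun i => ⟨i, rfl⟩
  · exact (hsrc _ _ _).symm

theorem HasBoundedTreeDecomp.crestrict {G : CG Lab ar} {k : ℕ} (h : HasBoundedTreeDecomp G k)
    (τ : Finset ℕ) : HasBoundedTreeDecomp (crestrict τ G) k :=
  h.map id Function.bijective_id (fun e => ⟨e, fun i => ⟨i, rfl⟩⟩) fun _ => ⟨_, rfl⟩

theorem HasBoundedTreeDecomp.crename {G : CG Lab ar} {k : ℕ} (h : HasBoundedTreeDecomp G k)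
    (α : Equiv.Perm ℕ) : HasBoundedTreeDecomp (crename α G) k :=
  h.map id Function.bijective_id (fun e => ⟨e, fun i => ⟨i, rfl⟩⟩) fun _ => ⟨_, rfl⟩

def CG.IsSource (G : CG Lab ar) (w : Fin G.n) : Prop := ∃ s, G.src s = w

section Composition

variable (G₁ G₂ : CG Lab ar)

noncomputable def ccompVert (z : Fin G₁.n ⊕ Fin G₂.n) : Fin (ccomp G₁ G₂).n :=
  Finite.equivFin _ (Quot.mk (fuseRel G₁ G₂) z)

theorem ccompVert_surjective : (ccompVert G₁ G₂).Surjective := fun v => by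
  obtain ⟨z, hz⟩ := Quot.exists_rep ((Finite.equivFin _).symm v)
  exact ⟨z, by rw [ccompVert, hz]; exact Equiv.apply_symm_apply _ v⟩

open Classical in
noncomputable def sumSources : Finset (Fin G₁.n ⊕ Fin G₂.n) :=
  Finset.univ.filter (Sum.elim G₁.IsSource G₂.IsSource)

variable {G₁ G₂}

theorem mem_sumSources {z : Fin G₁.n ⊕ Fin G₂.n} :
    z ∈ sumSources G₁ G₂ ↔ Sum.elim G₁.IsSource G₂.IsSource z := by
  simp [sumSources]

theorem ccompVert_eq_ccompVert {z z' : Fin G₁.n ⊕ Fin G₂.n}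
    (h : ccompVert G₁ G₂ z = ccompVert G₁ G₂ z') :
    z = z' ∨ (z ∈ sumSources G₁ G₂ ∧ z' ∈ sumSources G₁ G₂) := by
  simp only [mem_sumSources]
  have hrel := Quot.eqvGen_exact ((Finite.equivFin _).injective h)
  clear h
  induction hrel with
  | rel _ _ hfuse =>
    obtain ⟨s, h₁, h₂, rfl, rfl⟩ := hfuse
    exact .inr ⟨⟨_, rfl⟩, ⟨_, rfl⟩⟩
  | refl => exact .inl rfl
  | symm _ _ _ ih => exact ih.imp Eq.symm And.symm
  | trans _ _ _ _ _ ih₁ ih₂ =>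
    rcases ih₁ with rfl | ⟨hx, hy⟩
    · exact ih₂
    · rcases ih₂ with rfl | ⟨-, hz⟩
      exacts [.inr ⟨hx, hy⟩, .inr ⟨hx, hz⟩]

theorem ccomp_src_of_mem_left {s : ℕ} (hs : s ∈ (ccomp G₁ G₂).srt) (h : s ∈ G₁.srt) :
    (ccomp G₁ G₂).src ⟨s, hs⟩ = ccompVert G₁ G₂ (.inl (G₁.src ⟨s, h⟩)) :=
  dif_pos h

theorem ccomp_src_of_mem_right {s : ℕ} (hs : s ∈ (ccomp G₁ G₂).srt) (h : s ∈ G₂.srt) :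
    (ccomp G₁ G₂).src ⟨s, hs⟩ = ccompVert G₁ G₂ (.inr (G₂.src ⟨s, h⟩)) := by
  by_cases h₁ : s ∈ G₁.srt
  · rw [ccomp_src_of_mem_left hs h₁, ccompVert, ccompVert, Quot.sound ⟨s, h₁, h, rfl, rfl⟩]
  · exact dif_neg h₁

theorem ccomp_edg_inl (e : Fin G₁.m) :
    (ccomp G₁ G₂).edg (finSumFinEquiv (.inl e)) =
      ⟨(G₁.edg e).1, fun j => ccompVert G₁ G₂ (.inl ((G₁.edg e).2 j))⟩ := by
  simp [ccomp, ccompVert]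

theorem ccomp_edg_inr (e : Fin G₂.m) :
    (ccomp G₁ G₂).edg (finSumFinEquiv (.inr e)) =
      ⟨(G₂.edg e).1, fun j => ccompVert G₁ G₂ (.inr ((G₂.edg e).2 j))⟩ := by
  simp [ccomp, ccompVert]

theorem card_image_ccompVert_sumSources :
    ((sumSources G₁ G₂).image (ccompVert G₁ G₂)).card ≤ (G₁.srt ∪ G₂.srt).card := by
  have hsub : (sumSources G₁ G₂).image (ccompVert G₁ G₂) ⊆
      Finset.univ.image (ccomp G₁ G₂).src := by
    intro v hv
    obtain ⟨z, hz, rfl⟩ := Finset.mem_image.mp hv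
    rw [Finset.mem_image]
    rcases z with w | w <;> obtain ⟨⟨s, hs⟩, rfl⟩ := mem_sumSources.mp hz
    · exact ⟨⟨s, Finset.mem_union_left _ hs⟩, Finset.mem_univ _, ccomp_src_of_mem_left _ hs⟩
    · exact ⟨⟨s, Finset.mem_union_right _ hs⟩, Finset.mem_univ _, ccomp_src_of_mem_right _ hs⟩
  calc _ ≤ (Finset.univ.image (ccomp G₁ G₂).src).card := Finset.card_le_card hsub
    _ ≤ _ := Finset.card_image_le.trans_eq (by rw [Finset.card_univ, Fintype.card_coe]; rfl)

variable (td₁ : TreeDecomp G₁) (td₂ : TreeDecomp G₂)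

def compTree : SimpleGraph ((Unit ⊕ td₁.ι) ⊕ td₂.ι) :=
  ((⊥ : SimpleGraph Unit).sum td₁.T ⊔ edge (.inl ()) (.inr td₁.root)).sum td₂.T ⊔
    edge (.inl (.inl ())) (.inr td₂.root)

theorem compTree_isTree : (compTree td₁ td₂).IsTree :=
  (IsTree.of_subsingleton.sum_sup_edge td₁.isTree _ _).sum_sup_edge td₂.isTree _ _

-- The bags of the decomposition of `ccomp G₁ G₂` before the fusion `ccompVert` is applied.
noncomputable def compPreBag : (Unit ⊕ td₁.ι) ⊕ td₂.ι → Finset (Fin G₁.n ⊕ Fin G₂.n) :=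
  Sum.elim (Sum.elim (fun _ => sumSources G₁ G₂) fun x => (td₁.bag x).image .inl)
    fun y => (td₂.bag y).image .inr

theorem exists_mem_compPreBag (z : Fin G₁.n ⊕ Fin G₂.n) : ∃ x, z ∈ compPreBag td₁ td₂ x := by
  rcases z with w | w
  · obtain ⟨⟨x, hx⟩⟩ := (td₁.vert_connected w).nonempty
    exact ⟨.inl (.inr x), Finset.mem_image_of_mem _ hx⟩
  · obtain ⟨⟨x, hx⟩⟩ := (td₂.vert_connected w).nonempty
    exact ⟨.inr x, Finset.mem_image_of_mem _ hx⟩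

theorem compPreBag_preconnected (z : Fin G₁.n ⊕ Fin G₂.n) :
    ((compTree td₁ td₂).induce {x | z ∈ compPreBag td₁ td₂ x}).Preconnected := by
  apply Preconnected.induce_sum_sup_edge
  · apply Preconnected.induce_sum_sup_edge
    · exact Preconnected.of_subsingleton
    · exact Preconnected.induce_mem_image (fun w => (td₁.vert_connected w).preconnected) _
        (fun _ _ h => .inl (Sum.inl_injective h)) z
    · rintro ⟨⟩ x hz hx
      obtain ⟨w, -, rfl⟩ := Finset.mem_image.mp hx
      obtain ⟨s, rfl⟩ := mem_sumSources.mp hz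
      exact ⟨hz, Finset.mem_image_of_mem _ (td₁.root_bag s)⟩
  · exact Preconnected.induce_mem_image (fun w => (td₂.vert_connected w).preconnected) _
      (fun _ _ h => .inl (Sum.inr_injective h)) z
  · rintro (⟨⟩ | x) y hz hy <;> obtain ⟨w, -, rfl⟩ := Finset.mem_image.mp hy
    · obtain ⟨s, rfl⟩ := mem_sumSources.mp hz
      exact ⟨hz, Finset.mem_image_of_mem _ (td₂.root_bag s)⟩
    · simp [compPreBag] at hz

end Composition

theorem HasBoundedTreeDecomp.ccomp {G₁ G₂ : CG Lab ar} {k : ℕ}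
    (h₁ : HasBoundedTreeDecomp G₁ k) (h₂ : HasBoundedTreeDecomp G₂ k)
    (hs : (G₁.srt ∪ G₂.srt).card ≤ k) : HasBoundedTreeDecomp (ccomp G₁ G₂) k := by
  obtain ⟨td₁, hb₁⟩ := h₁
  obtain ⟨td₂, hb₂⟩ := h₂
  have := td₁.finι
  have := td₂.finι
  refine ⟨{
    ι := (Unit ⊕ td₁.ι) ⊕ td₂.ι
    finι := inferInstance
    T := compTree td₁ td₂
    isTree := compTree_isTree td₁ td₂
    root := .inl (.inl ())
    bag := fun x => (compPreBag td₁ td₂ x).image (ccompVert G₁ G₂)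
    edges_covered := fun e => ?_
    vert_connected := fun v => ?_
    root_bag := fun s => ?_ }, ?_⟩
  · obtain ⟨e₁ | e₂, rfl⟩ := finSumFinEquiv.surjective e
    · obtain ⟨x, hx⟩ := td₁.edges_covered e₁
      rw [ccomp_edg_inl]
      exact ⟨.inl (.inr x), fun i =>
        Finset.mem_image_of_mem _ (Finset.mem_image_of_mem _ (hx i))⟩
    · obtain ⟨x, hx⟩ := td₂.edges_covered e₂
      rw [ccomp_edg_inr]
      exact ⟨.inr x, fun i => Finset.mem_image_of_mem _ (Finset.mem_image_of_mem _ (hx i))⟩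
  · obtain ⟨z, rfl⟩ := ccompVert_surjective G₁ G₂ v
    obtain ⟨x, hx⟩ := exists_mem_compPreBag td₁ td₂ z
    refine (connected_iff _).mpr ⟨?_, ⟨⟨x, Finset.mem_image_of_mem _ hx⟩⟩⟩
    exact Preconnected.induce_mem_image (compPreBag_preconnected td₁ td₂) _
      (fun _ _ h => (ccompVert_eq_ccompVert h).imp_right (⟨.inl (.inl ()), ·⟩)) _
  · obtain ⟨s, hs⟩ := s
    rcases Finset.mem_union.mp hs with h | h
    · rw [ccomp_src_of_mem_left hs h]
      exact Finset.mem_image_of_mem _ (mem_sumSources.mpr ⟨_, rfl⟩)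
    · rw [ccomp_src_of_mem_right hs h]
      exact Finset.mem_image_of_mem _ (mem_sumSources.mpr ⟨_, rfl⟩)
  · rintro ((⟨⟩ | x) | x)
    · exact card_image_ccompVert_sumSources.trans hs
    · exact Finset.card_image_le.trans (Finset.card_image_le.trans (hb₁ x))
    · exact Finset.card_image_le.trans (Finset.card_image_le.trans (hb₂ x))

theorem HRT.val_srt_subset {τ : Finset ℕ} :
    ∀ {t : HRT Lab ar}, t.usesOnly τ → t.val.srt ⊆ τ
  | .zero _, h => h
  | .edge _ _, h => Finset.image_subset_iff.mpr fun i _ => h i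
  | .restrict _ _, h => Finset.inter_subset_right.trans h.1
  | .rename _ _ _, h => crename_srt_subset h.1 (val_srt_subset h.2)
  | .comp _ _, h => Finset.union_subset (val_srt_subset h.1) (val_srt_subset h.2)

theorem HRT.hasBoundedTreeDecomp_val {τ : Finset ℕ} :
    ∀ {t : HRT Lab ar}, t.usesOnly τ → HasBoundedTreeDecomp t.val τ.card
  | .zero _, h => hasBoundedTreeDecomp_of_n_le (Finset.card_le_card h)
  | .edge _ _, h =>
    hasBoundedTreeDecomp_of_n_le (Finset.card_le_card (val_srt_subset (t := .edge _ _) h))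
  | .restrict τ' _, h => (hasBoundedTreeDecomp_val h.2).crestrict τ'
  | .rename α _ _, h => (hasBoundedTreeDecomp_val h.2).crename α
  | .comp _ _, h => (hasBoundedTreeDecomp_val h.1).ccomp (hasBoundedTreeDecomp_val h.2)
      (Finset.card_le_card (val_srt_subset (t := .comp _ _) h))

/-- For every finite sort `τ`, every graph that is the value of a
ground term over the `τ`-restricted HR signature has tree-width at most `|τ| − 1`,
i.e., it has a tree decomposition all of whose bags have at most `|τ|` elements. -/
theorem term_generated_graphs_have_bounded_treewidth {Lab : Type} {ar : Lab → ℕ}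
    (τ : Finset ℕ) (t : HRT Lab ar) (ht : t.usesOnly τ) (G : CG Lab ar)
    (hG : GIso t.val G) :
    ∃ td : TreeDecomp G, ∀ x, (td.bag x).card ≤ τ.card :=
  (HRT.hasBoundedTreeDecomp_val ht).of_giso hG

end GraphCF
end

section
/- For any set L of graphs (of arbitrary sorts), graphs G₁ and G₂ are equivalent under the syntactic congruence of L in the HR graph algebra if and only if they have the same sort and for every graph G, every finite permutation α of source labels, and every finite sort τ: rename_α(restrict_τ(G₁ ∥ G)) ∈ L ⟺ rename_α(restrict_τ(G₂ ∥ G)) ∈ L. -/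
set_option autoImplicit false

namespace GraphCF

noncomputable section

variable {Lab : Type} {ar : Lab → ℕ}

/-! Call `rename_α(restrict_τ(X ∥ G))`, with `α` a finite permutation, a basic context. Equivalence
under all basic contexts is already a congruence of the HR algebra, because an HR operation
applied to `X` can be absorbed into a basic context up to isomorphism: `(X ∥ Z) ∥ G ≅ X ∥ (Z ∥ G)`,
and `∥` is commutative; `rename_β` is absorbed by conjugating the context with `β`; for
`restrict_τ'` one first renames `G` by a finite permutation fixing the visible sources of
`restrict_τ' X`, so that `G` shares no source with the sources of `X` hidden by `τ'`, and then
the restriction moves outside of `· ∥ G`. As `L` is closed under isomorphism and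
`rename_1(restrict_{sort X}(X ∥ 0_∅)) ≅ X`, the congruence saturates `L`, and induction on
contexts yields the syntactic congruence. -/

theorem IsFinPerm.one : IsFinPerm 1 := ⟨∅, fun _ _ => rfl⟩

theorem IsFinPerm.mul {α β : Equiv.Perm ℕ} (hα : IsFinPerm α) (hβ : IsFinPerm β) :
    IsFinPerm (α * β) := by
  obtain ⟨s, hs⟩ := hα
  obtain ⟨t, ht⟩ := hβ
  refine ⟨s ∪ t, fun x hx => ?_⟩
  rw [Finset.mem_union, not_or] at hx
  rw [Equiv.Perm.mul_apply, ht x hx.2, hs x hx.1]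

theorem IsFinPerm.symm {α : Equiv.Perm ℕ} (hα : IsFinPerm α) : IsFinPerm α.symm := by
  obtain ⟨s, hs⟩ := hα
  exact ⟨s, fun x hx => by rw [Equiv.symm_apply_eq, hs x hx]⟩

theorem exists_isFinPerm_mapsTo_compl (C D : Finset ℕ) :
    ∃ γ : Equiv.Perm ℕ, IsFinPerm γ ∧ (∀ x ∈ C, γ x ∉ D) ∧ ∀ x ∈ D, x ∉ C → γ x = x := by
  induction C using Finset.induction_on with
  | empty => exact ⟨1, IsFinPerm.one, by simp, fun _ _ _ => rfl⟩
  | @insert a C ha ih =>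
    obtain ⟨γ, ⟨T, hT⟩, hmaps, hfix⟩ := ih
    obtain ⟨f, hf⟩ := Infinite.exists_notMem_finset (D ∪ insert a C ∪ T)
    simp only [Finset.mem_union, Finset.mem_insert, not_or] at hf
    obtain ⟨⟨hfD, hfa, hfC⟩, hfT⟩ := hf
    have hγf : γ f = f := hT f hfT
    have hswap : ∀ x, x ≠ a → x ≠ f → (γ * Equiv.swap a f) x = γ x := fun x hxa hxf => by
      rw [Equiv.Perm.mul_apply, Equiv.swap_apply_of_ne_of_ne hxa hxf]
    refine ⟨γ * Equiv.swap a f, IsFinPerm.mul ⟨T, hT⟩ ⟨{a, f}, fun x hx => ?_⟩, fun x hx => ?_,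
      fun x hxD hx => ?_⟩
    · simp only [Finset.mem_insert, Finset.mem_singleton, not_or] at hx
      exact Equiv.swap_apply_of_ne_of_ne hx.1 hx.2
    · rcases Finset.mem_insert.mp hx with rfl | hxC
      · rwa [Equiv.Perm.mul_apply, Equiv.swap_apply_left, hγf]
      · rw [hswap x (fun h => ha (h ▸ hxC)) (fun h => hfC (h ▸ hxC))]
        exact hmaps x hxC
    · rw [Finset.mem_insert, not_or] at hx
      rw [hswap x hx.1 (fun h => hfD (h ▸ hxD))]
      exact hfix x hxD hx.2

theorem exists_isFinPerm_fresh (S T τ : Finset ℕ) :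
    ∃ β : Equiv.Perm ℕ, IsFinPerm β ∧ (∀ x ∈ S ∩ τ, β x = x) ∧ S ∩ T.image β.symm ⊆ τ := by
  obtain ⟨γ, hγ, hmaps, hfix⟩ := exists_isFinPerm_mapsTo_compl (T ∩ (S \ τ)) (S ∪ T)
  refine ⟨γ.symm, hγ.symm, fun x hx => ?_, fun x hx => ?_⟩
  · rw [Finset.mem_inter] at hx
    rw [Equiv.symm_apply_eq, hfix x (Finset.mem_union_left _ hx.1) (by simp [hx.2])]
  · obtain ⟨hxS, hxT⟩ := Finset.mem_inter.mp hx
    obtain ⟨y, hyT, rfl⟩ := Finset.mem_image.mp hxT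
    rw [Equiv.symm_symm] at hxS ⊢
    by_contra hyτ
    by_cases hyC : y ∈ T ∩ (S \ τ)
    · exact hmaps y hyC (Finset.mem_union_left _ hxS)
    · rw [hfix y (Finset.mem_union_right _ hyT) hyC] at hxS hyτ
      exact hyC (by simp [hyT, hxS, hyτ])

/-- `GIso` with its `HEq` edge condition turned into an equation of sigma types. -/
def Iso (G₁ G₂ : CG Lab ar) : Prop :=
  G₁.srt = G₂.srt ∧
  ∃ (ev : Fin G₁.n ≃ Fin G₂.n) (ee : Fin G₁.m ≃ Fin G₂.m),
    (∀ e, G₂.edg (ee e) = ⟨(G₁.edg e).1, ev ∘ (G₁.edg e).2⟩) ∧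
    ∀ (s : ℕ) (h₁ : s ∈ G₁.srt) (h₂ : s ∈ G₂.srt), ev (G₁.src ⟨s, h₁⟩) = G₂.src ⟨s, h₂⟩

theorem gIso_iff_iso {G₁ G₂ : CG Lab ar} : GIso G₁ G₂ ↔ Iso G₁ G₂ := by
  refine and_congr_right fun _ => exists_congr fun ev => exists_congr fun ee =>
    and_congr_left fun _ => forall_congr' fun e => ?_
  rw [Sigma.ext_iff]
  rfl

namespace Iso

theorem refl (G : CG Lab ar) : Iso G G :=
  ⟨rfl, Equiv.refl _, Equiv.refl _, fun _ => rfl, fun _ _ _ => rfl⟩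

theorem symm {G₁ G₂ : CG Lab ar} (h : Iso G₁ G₂) : Iso G₂ G₁ := by
  obtain ⟨hsrt, ev, ee, hedg, hsrc⟩ := h
  refine ⟨hsrt.symm, ev.symm, ee.symm, fun e => ?_, fun s h₂ h₁ => ?_⟩
  · have h := hedg (ee.symm e)
    rw [ee.apply_symm_apply] at h
    rw [h]
    simp [Function.comp_def]
  · rw [Equiv.symm_apply_eq, hsrc s h₁ h₂]

theorem trans {G₁ G₂ G₃ : CG Lab ar} (h : Iso G₁ G₂) (h' : Iso G₂ G₃) : Iso G₁ G₃ := by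
  obtain ⟨hsrt, ev, ee, hedg, hsrc⟩ := h
  obtain ⟨hsrt', ev', ee', hedg', hsrc'⟩ := h'
  refine ⟨hsrt.trans hsrt', ev.trans ev', ee.trans ee', fun e => ?_, fun s h₁ h₃ => ?_⟩
  · rw [Equiv.trans_apply, hedg' (ee e), hedg e]
    rfl
  · have h₂ : s ∈ G₂.srt := hsrt ▸ h₁
    simp [hsrc s h₁ h₂, hsrc' s h₂ h₃]

instance : @Trans (CG Lab ar) (CG Lab ar) (CG Lab ar) Iso Iso Iso := ⟨trans⟩

theorem crename (α : Equiv.Perm ℕ) {X Y : CG Lab ar} (h : Iso X Y) :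
    Iso (crename α X) (crename α Y) := by
  obtain ⟨hsrt, ev, ee, hedg, hsrc⟩ := h
  refine ⟨by rw [crename_srt, crename_srt, hsrt], ev, ee, hedg, fun s h₁ h₂ => ?_⟩
  obtain ⟨y, hy, rfl⟩ := Finset.mem_image.mp h₁
  exact hsrc _ (by simpa using hy) (by simpa [← hsrt] using hy)

theorem crestrict (τ : Finset ℕ) {X Y : CG Lab ar} (h : Iso X Y) :
    Iso (crestrict τ X) (crestrict τ Y) := by
  obtain ⟨hsrt, ev, ee, hedg, hsrc⟩ := h
  refine ⟨by rw [crestrict_srt, crestrict_srt, hsrt], ev, ee, hedg, fun s h₁ h₂ => ?_⟩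
  exact hsrc s (Finset.mem_inter.mp h₁).1 (Finset.mem_inter.mp h₂).1

end Iso

theorem IsoClosed.mem_iff {L : Set (CG Lab ar)} (hL : IsoClosed L) {X Y : CG Lab ar}
    (h : Iso X Y) : X ∈ L ↔ Y ∈ L :=
  ⟨hL X Y (gIso_iff_iso.mpr h), hL Y X (gIso_iff_iso.mpr h.symm)⟩

theorem iso_of_src_eq {n m : ℕ} {edg : Fin m → (a : Lab) × (Fin (ar a) → Fin n)}
    {srt₁ srt₂ : Finset ℕ} {src₁ : {s : ℕ // s ∈ srt₁} → Fin n}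
    {src₂ : {s : ℕ // s ∈ srt₂} → Fin n} (hsrt : srt₁ = srt₂)
    (hsrc : ∀ (s : ℕ) (h₁ : s ∈ srt₁) (h₂ : s ∈ srt₂), src₁ ⟨s, h₁⟩ = src₂ ⟨s, h₂⟩) :
    Iso (⟨n, m, edg, srt₁, src₁⟩ : CG Lab ar) ⟨n, m, edg, srt₂, src₂⟩ :=
  ⟨hsrt, Equiv.refl _, Equiv.refl _, fun _ => rfl, hsrc⟩

theorem crename_crename_iso (α β : Equiv.Perm ℕ) (X : CG Lab ar) :
    Iso (crename α (crename β X)) (crename (β * α) X) := by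
  refine iso_of_src_eq ?_ fun _ _ _ => rfl
  show Finset.image _ (Finset.image _ X.srt) = _
  rw [Finset.image_image]
  rfl

theorem crename_crestrict_iso (β : Equiv.Perm ℕ) (τ : Finset ℕ) (X : CG Lab ar) :
    Iso (crename β (crestrict τ X)) (crestrict (τ.image β.symm) (crename β X)) :=
  iso_of_src_eq (Finset.image_inter _ _ β.symm.injective) fun _ _ _ => rfl

theorem crename_iso_self_of_fix {β : Equiv.Perm ℕ} {X : CG Lab ar}
    (hfix : ∀ x ∈ X.srt, β x = x) : Iso (crename β X) X := by
  have hfix' : ∀ x ∈ X.srt, β.symm x = x := fun x hx => by rw [Equiv.symm_apply_eq, hfix x hx]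
  refine iso_of_src_eq ?_ fun s _ h₂ => congrArg X.src (Subtype.ext (hfix s h₂))
  exact (Finset.image_congr fun x hx => hfix' x hx).trans Finset.image_id

theorem crestrict_crestrict_iso (σ τ : Finset ℕ) (X : CG Lab ar) :
    Iso (crestrict τ (crestrict σ X)) (crestrict (σ ∩ τ) X) :=
  iso_of_src_eq (Finset.inter_assoc _ _ _) fun _ _ _ => rfl

theorem crestrict_iso_self {τ : Finset ℕ} {X : CG Lab ar} (h : X.srt ⊆ τ) :
    Iso (crestrict τ X) X :=
  iso_of_src_eq (Finset.inter_eq_left.mpr h) fun _ _ _ => rfl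

/-! The vertices of `A ∥ B` form the pushout of `Fin A.n` and `Fin B.n` along the common
source labels: `ccompInl` and `ccompInr` are its injections and `ccompLift` its universal map. -/

section ParallelComposition

variable (A B : CG Lab ar)

def ccompInl (x : Fin A.n) : Fin (ccomp A B).n :=
  Finite.equivFin (Quot (fuseRel A B)) (Quot.mk _ (.inl x))

def ccompInr (y : Fin B.n) : Fin (ccomp A B).n :=
  Finite.equivFin (Quot (fuseRel A B)) (Quot.mk _ (.inr y))

theorem ccompInl_src_eq_ccompInr_src {s : ℕ} (h₁ : s ∈ A.srt) (h₂ : s ∈ B.srt) :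
    ccompInl A B (A.src ⟨s, h₁⟩) = ccompInr A B (B.src ⟨s, h₂⟩) :=
  congrArg _ (Quot.sound ⟨s, h₁, h₂, rfl, rfl⟩)

theorem ccomp_src_of_mem_left_s10 {s : ℕ} (h : s ∈ A.srt) (hs : s ∈ (ccomp A B).srt) :
    (ccomp A B).src ⟨s, hs⟩ = ccompInl A B (A.src ⟨s, h⟩) :=
  dif_pos h

theorem ccomp_src_of_mem_right_s10 {s : ℕ} (h : s ∈ B.srt) (hs : s ∈ (ccomp A B).srt) :
    (ccomp A B).src ⟨s, hs⟩ = ccompInr A B (B.src ⟨s, h⟩) := by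
  by_cases hA : s ∈ A.srt
  · rw [ccomp_src_of_mem_left_s10 A B hA, ccompInl_src_eq_ccompInr_src]
  · exact dif_neg hA

theorem ccomp_edg_inl_s10 (e : Fin A.m) :
    (ccomp A B).edg (finSumFinEquiv (.inl e)) = ⟨(A.edg e).1, ccompInl A B ∘ (A.edg e).2⟩ := by
  dsimp only [ccomp]
  rw [Equiv.symm_apply_apply]
  rfl

theorem ccomp_edg_inr_s10 (e : Fin B.m) :
    (ccomp A B).edg (finSumFinEquiv (.inr e)) = ⟨(B.edg e).1, ccompInr A B ∘ (B.edg e).2⟩ := by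
  dsimp only [ccomp]
  rw [Equiv.symm_apply_apply]
  rfl

theorem ccomp_vertex_cases (v : Fin (ccomp A B).n) :
    (∃ x, ccompInl A B x = v) ∨ ∃ y, ccompInr A B y = v := by
  obtain ⟨q, rfl⟩ := (Finite.equivFin _).surjective v
  induction q using Quot.ind with
  | mk z => rcases z with x | y; exacts [.inl ⟨x, rfl⟩, .inr ⟨y, rfl⟩]

theorem ccomp_funext {V : Type} {φ ψ : Fin (ccomp A B).n → V}
    (hl : ∀ x, φ (ccompInl A B x) = ψ (ccompInl A B x))
    (hr : ∀ y, φ (ccompInr A B y) = ψ (ccompInr A B y)) : φ = ψ :=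
  funext fun v => by rcases ccomp_vertex_cases A B v with ⟨x, rfl⟩ | ⟨y, rfl⟩; exacts [hl x, hr y]

variable {A B} {V : Type} (f : Fin A.n → V) (g : Fin B.n → V)
  (hglue : ∀ (s : ℕ) (h₁ : s ∈ A.srt) (h₂ : s ∈ B.srt), f (A.src ⟨s, h₁⟩) = g (B.src ⟨s, h₂⟩))

def ccompLift (v : Fin (ccomp A B).n) : V :=
  Quot.lift (Sum.elim f g) (by rintro _ _ ⟨s, h₁, h₂, rfl, rfl⟩; exact hglue s h₁ h₂)
    ((Finite.equivFin _).symm v)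

@[simp]
theorem ccompLift_inl (x : Fin A.n) : ccompLift f g hglue (ccompInl A B x) = f x := by
  simp [ccompLift, ccompInl]

@[simp]
theorem ccompLift_inr (y : Fin B.n) : ccompLift f g hglue (ccompInr A B y) = g y := by
  simp [ccompLift, ccompInr]

end ParallelComposition

theorem iso_ccomp_of {A B Y : CG Lab ar} (f : Fin A.n → Fin Y.n) (g : Fin B.n → Fin Y.n)
    (hglue : ∀ (s : ℕ) (h₁ : s ∈ A.srt) (h₂ : s ∈ B.srt), f (A.src ⟨s, h₁⟩) = g (B.src ⟨s, h₂⟩))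
    (inv : Fin Y.n → Fin (ccomp A B).n)
    (hinvl : ∀ x, inv (f x) = ccompInl A B x) (hinvr : ∀ y, inv (g y) = ccompInr A B y)
    (hcover : ∀ v, (∃ x, f x = v) ∨ ∃ y, g y = v)
    (ee : Fin A.m ⊕ Fin B.m ≃ Fin Y.m)
    (hedgl : ∀ e, Y.edg (ee (.inl e)) = ⟨(A.edg e).1, f ∘ (A.edg e).2⟩)
    (hedgr : ∀ e, Y.edg (ee (.inr e)) = ⟨(B.edg e).1, g ∘ (B.edg e).2⟩)
    (hsrt : A.srt ∪ B.srt = Y.srt)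
    (hsrcl : ∀ (s : ℕ) (h : s ∈ A.srt) (h' : s ∈ Y.srt), Y.src ⟨s, h'⟩ = f (A.src ⟨s, h⟩))
    (hsrcr : ∀ (s : ℕ) (h : s ∈ B.srt) (h' : s ∈ Y.srt), Y.src ⟨s, h'⟩ = g (B.src ⟨s, h⟩)) :
    Iso (ccomp A B) Y := by
  let ev : Fin (ccomp A B).n ≃ Fin Y.n :=
    { toFun := ccompLift f g hglue
      invFun := inv
      left_inv := congrFun (ccomp_funext A B (by simp [hinvl]) (by simp [hinvr]))
      right_inv := fun v => by rcases hcover v with ⟨x, rfl⟩ | ⟨y, rfl⟩ <;> simp [hinvl, hinvr] }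
  refine ⟨hsrt, ev, finSumFinEquiv.symm.trans ee, fun i => ?_, fun s h₁ h₂ => ?_⟩
  · obtain ⟨u, rfl⟩ := finSumFinEquiv.surjective i
    rcases u with e | e
    · show Y.edg (ee (finSumFinEquiv.symm (finSumFinEquiv (.inl e)))) = _
      rw [Equiv.symm_apply_apply, hedgl, ccomp_edg_inl_s10]
      simp [ev, Function.comp_def]
    · show Y.edg (ee (finSumFinEquiv.symm (finSumFinEquiv (.inr e)))) = _
      rw [Equiv.symm_apply_apply, hedgr, ccomp_edg_inr_s10]
      simp [ev, Function.comp_def]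
  · rcases Finset.mem_union.mp h₁ with h | h
    · simp [ev, ccomp_src_of_mem_left_s10 A B h, hsrcl s h h₂]
    · simp [ev, ccomp_src_of_mem_right_s10 A B h, hsrcr s h h₂]

theorem Iso.ccomp {A B A' B' : CG Lab ar} (hA : Iso A A') (hB : Iso B B') :
    Iso (ccomp A B) (ccomp A' B') := by
  obtain ⟨hsA, evA, eeA, heA, hcA⟩ := hA
  obtain ⟨hsB, evB, eeB, heB, hcB⟩ := hB
  have hcA' : ∀ s h₁ h₂, evA.symm (A'.src ⟨s, h₂⟩) = A.src ⟨s, h₁⟩ := fun s h₁ h₂ => by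
    rw [Equiv.symm_apply_eq, hcA]
  have hcB' : ∀ s h₁ h₂, evB.symm (B'.src ⟨s, h₂⟩) = B.src ⟨s, h₁⟩ := fun s h₁ h₂ => by
    rw [Equiv.symm_apply_eq, hcB]
  refine iso_ccomp_of (ccompInl A' B' ∘ evA) (ccompInr A' B' ∘ evB) (fun s h₁ h₂ => ?_)
    (ccompLift (ccompInl A B ∘ evA.symm) (ccompInr A B ∘ evB.symm) fun s h₁ h₂ => ?_)
    (by simp) (by simp) (fun v => ?_) ((Equiv.sumCongr eeA eeB).trans finSumFinEquiv)
    (fun e => ?_) (fun e => ?_) (by rw [ccomp_srt, hsA, hsB]) (fun s h _ => ?_) (fun s h _ => ?_)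
  · simp only [Function.comp_apply, hcA s h₁ (hsA ▸ h₁), hcB s h₂ (hsB ▸ h₂)]
    exact ccompInl_src_eq_ccompInr_src _ _ _ _
  · simp only [Function.comp_apply, hcA' s (hsA ▸ h₁) h₁, hcB' s (hsB ▸ h₂) h₂]
    exact ccompInl_src_eq_ccompInr_src _ _ _ _
  · rcases ccomp_vertex_cases A' B' v with ⟨x, rfl⟩ | ⟨y, rfl⟩
    exacts [.inl ⟨evA.symm x, by simp⟩, .inr ⟨evB.symm y, by simp⟩]
  · show (GraphCF.ccomp A' B').edg (finSumFinEquiv (.inl (eeA e))) = _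
    rw [ccomp_edg_inl_s10, heA]
    rfl
  · show (GraphCF.ccomp A' B').edg (finSumFinEquiv (.inr (eeB e))) = _
    rw [ccomp_edg_inr_s10, heB]
    rfl
  · rw [ccomp_src_of_mem_left_s10 _ _ (hsA ▸ h), Function.comp_apply, hcA s h (hsA ▸ h)]
  · rw [ccomp_src_of_mem_right_s10 _ _ (hsB ▸ h), Function.comp_apply, hcB s h (hsB ▸ h)]

theorem ccomp_comm_iso (A B : CG Lab ar) : Iso (ccomp A B) (ccomp B A) :=
  iso_ccomp_of (ccompInr B A) (ccompInl B A)
    (fun _ h₁ h₂ => (ccompInl_src_eq_ccompInr_src B A h₂ h₁).symm)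
    (ccompLift (ccompInr A B) (ccompInl A B) fun _ h₁ h₂ =>
      (ccompInl_src_eq_ccompInr_src A B h₂ h₁).symm)
    (by simp) (by simp) (fun v => (ccomp_vertex_cases B A v).symm)
    ((Equiv.sumComm _ _).trans finSumFinEquiv) (ccomp_edg_inr_s10 B A) (ccomp_edg_inl_s10 B A)
    (Finset.union_comm _ _) (fun _ h _ => ccomp_src_of_mem_right_s10 B A h _)
    (fun _ h _ => ccomp_src_of_mem_left_s10 B A h _)

theorem mem_of_mem_crename {β : Equiv.Perm ℕ} {X : CG Lab ar} {s : ℕ}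
    (h : s ∈ (crename β X).srt) : β s ∈ X.srt := by
  obtain ⟨y, hy, rfl⟩ := Finset.mem_image.mp h
  simpa using hy

theorem crename_src_symm_apply (β : Equiv.Perm ℕ) (X : CG Lab ar) {s : ℕ} (h : s ∈ X.srt) :
    (crename β X).src ⟨β.symm s, Finset.mem_image_of_mem _ h⟩ = X.src ⟨s, h⟩ :=
  congrArg X.src (Subtype.ext (β.apply_symm_apply s))

theorem ccomp_crename_iso (β : Equiv.Perm ℕ) (A B : CG Lab ar) :
    Iso (ccomp (crename β A) (crename β B)) (crename β (ccomp A B)) :=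
  iso_ccomp_of (Y := crename β (ccomp A B)) (ccompInl A B) (ccompInr A B)
    (fun _ _ _ => ccompInl_src_eq_ccompInr_src A B _ _)
    (ccompLift (A := A) (B := B) (ccompInl (crename β A) (crename β B))
      (ccompInr (crename β A) (crename β B))
      fun _ h₁ h₂ => by
        rw [← crename_src_symm_apply β A h₁, ← crename_src_symm_apply β B h₂]
        exact ccompInl_src_eq_ccompInr_src _ _ _ _)
    (fun x => ccompLift_inl (A := A) (B := B) _ _ _ x)
    (fun y => ccompLift_inr (A := A) (B := B) _ _ _ y) (ccomp_vertex_cases A B) finSumFinEquiv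
    (ccomp_edg_inl_s10 A B) (ccomp_edg_inr_s10 A B) (Finset.image_union _ _).symm
    (fun _ h _ => ccomp_src_of_mem_left_s10 A B (mem_of_mem_crename h) _)
    (fun _ h _ => ccomp_src_of_mem_right_s10 A B (mem_of_mem_crename h) _)

theorem ccomp_crestrict_iso {τ : Finset ℕ} {X G : CG Lab ar} (hτ : X.srt ∩ G.srt ⊆ τ) :
    Iso (ccomp (crestrict τ X) G) (crestrict (X.srt ∩ τ ∪ G.srt) (ccomp X G)) := by
  refine iso_ccomp_of (Y := crestrict (X.srt ∩ τ ∪ G.srt) (ccomp X G)) (ccompInl X G)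
    (ccompInr X G) (fun _ _ _ => ccompInl_src_eq_ccompInr_src X G _ _)
    (ccompLift (A := X) (ccompInl (crestrict τ X) G) (ccompInr (crestrict τ X) G) fun _ h₁ h₂ =>
      ccompInl_src_eq_ccompInr_src (crestrict τ X) G
        (Finset.mem_inter.mpr ⟨h₁, hτ (Finset.mem_inter.mpr ⟨h₁, h₂⟩)⟩) h₂)
    (fun x => ccompLift_inl (A := X) (B := G) _ _ _ x)
    (fun y => ccompLift_inr (A := X) (B := G) _ _ _ y) (ccomp_vertex_cases X G) finSumFinEquiv
    (ccomp_edg_inl_s10 X G) (ccomp_edg_inr_s10 X G) ?_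
    (fun _ h _ => ccomp_src_of_mem_left_s10 X G (Finset.mem_inter.mp h).1 _)
    (fun _ h _ => ccomp_src_of_mem_right_s10 X G h _)
  ext s
  simp only [crestrict_srt, ccomp_srt, Finset.mem_union, Finset.mem_inter]
  tauto

theorem ccomp_czero_empty_iso (H : CG Lab ar) : Iso (ccomp H (czero ∅)) H := by
  have : IsEmpty (Fin (czero (∅ : Finset ℕ) : CG Lab ar).n) := ⟨fun y => by simpa [czero] using y.2⟩
  have : IsEmpty (Fin (czero (∅ : Finset ℕ) : CG Lab ar).m) := Fin.isEmpty'
  exact iso_ccomp_of id isEmptyElim (fun _ _ h => absurd h (Finset.notMem_empty _))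
    (ccompInl H (czero ∅)) (fun _ => rfl) isEmptyElim (fun v => .inl ⟨v, rfl⟩)
    (Equiv.sumEmpty _ _) (fun _ => rfl) isEmptyElim (Finset.union_empty _)
    (fun _ _ _ => rfl) (fun _ h => absurd h (Finset.notMem_empty _))

section Associativity

variable (A B C : CG Lab ar)

def ccompAssocLeft : Fin (ccomp A B).n → Fin (ccomp A (ccomp B C)).n :=
  ccompLift (ccompInl A (ccomp B C)) (ccompInr A (ccomp B C) ∘ ccompInl B C) fun s hA hB => by
    rw [Function.comp_apply, ← ccomp_src_of_mem_left_s10 B C hB (Finset.mem_union_left _ hB)]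
    exact ccompInl_src_eq_ccompInr_src _ _ _ _

@[simp]
theorem ccompAssocLeft_inl (x : Fin A.n) :
    ccompAssocLeft A B C (ccompInl A B x) = ccompInl A (ccomp B C) x :=
  ccompLift_inl _ _ _ x

@[simp]
theorem ccompAssocLeft_inr (y : Fin B.n) :
    ccompAssocLeft A B C (ccompInr A B y) = ccompInr A (ccomp B C) (ccompInl B C y) :=
  ccompLift_inr _ _ _ y

theorem ccompAssocLeft_src {s : ℕ} (hAB : s ∈ (ccomp A B).srt) (hC : s ∈ C.srt) :
    ccompAssocLeft A B C ((ccomp A B).src ⟨s, hAB⟩) =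
      ccompInr A (ccomp B C) (ccompInr B C (C.src ⟨s, hC⟩)) := by
  have hBC : s ∈ (ccomp B C).srt := Finset.mem_union_right _ hC
  rcases Finset.mem_union.mp hAB with hA | hB
  · rw [ccomp_src_of_mem_left_s10 A B hA, ccompAssocLeft_inl, ccompInl_src_eq_ccompInr_src A _ hA hBC,
      ccomp_src_of_mem_right_s10 B C hC]
  · rw [ccomp_src_of_mem_right_s10 A B hB, ccompAssocLeft_inr, ccompInl_src_eq_ccompInr_src B C hB hC]

def ccompAssocBwd : Fin (ccomp A (ccomp B C)).n → Fin (ccomp (ccomp A B) C).n :=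
  ccompLift (ccompInl (ccomp A B) C ∘ ccompInl A B)
    (ccompLift (ccompInl (ccomp A B) C ∘ ccompInr A B) (ccompInr (ccomp A B) C)
      fun s hB hC => by
        rw [Function.comp_apply, ← ccomp_src_of_mem_right_s10 A B hB (Finset.mem_union_right _ hB)]
        exact ccompInl_src_eq_ccompInr_src _ _ _ _)
    fun s hA hBC => by
      by_cases hC : s ∈ C.srt
      · rw [ccomp_src_of_mem_right_s10 B C hC, ccompLift_inr, Function.comp_apply,
          ← ccomp_src_of_mem_left_s10 A B hA (Finset.mem_union_left _ hA)]
        exact ccompInl_src_eq_ccompInr_src _ _ _ _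
      · have hB : s ∈ B.srt := (Finset.mem_union.mp hBC).resolve_right hC
        rw [ccomp_src_of_mem_left_s10 B C hB, ccompLift_inl, Function.comp_apply, Function.comp_apply,
          ccompInl_src_eq_ccompInr_src A B hA hB]

def ccompAssocEdges : Fin (ccomp A B).m ⊕ Fin C.m ≃ Fin (ccomp A (ccomp B C)).m :=
  finSumFinEquiv.trans (finCongr (Nat.add_assoc _ _ _))

theorem ccompAssocEdges_inl_inl (x : Fin A.m) :
    ccompAssocEdges A B C (.inl (finSumFinEquiv (.inl x))) = finSumFinEquiv (.inl x) :=
  Fin.ext rfl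

theorem ccompAssocEdges_inl_inr (y : Fin B.m) :
    ccompAssocEdges A B C (.inl (finSumFinEquiv (.inr y))) =
      finSumFinEquiv (m := A.m) (n := (ccomp B C).m) (.inr (finSumFinEquiv (.inl y))) :=
  Fin.ext rfl

theorem ccompAssocEdges_inr (z : Fin C.m) :
    ccompAssocEdges A B C (.inr z) =
      finSumFinEquiv (m := A.m) (n := (ccomp B C).m) (.inr (finSumFinEquiv (.inr z))) :=
  Fin.ext (Nat.add_assoc _ _ _)

theorem ccomp_assoc_iso : Iso (ccomp (ccomp A B) C) (ccomp A (ccomp B C)) := by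
  refine iso_ccomp_of (ccompAssocLeft A B C) (ccompInr A (ccomp B C) ∘ ccompInr B C)
    (fun s h₁ h₂ => ccompAssocLeft_src A B C h₁ h₂) (ccompAssocBwd A B C)
    (fun x => ?_) (fun y => by simp [ccompAssocBwd]) (fun v => ?_) (ccompAssocEdges A B C)
    (fun e => ?_) (fun z => ?_) (Finset.union_assoc _ _ _) (fun s h h' => ?_) (fun s h h' => ?_)
  · refine congrFun (ccomp_funext A B (φ := ccompAssocBwd A B C ∘ ccompAssocLeft A B C)
      (fun x => ?_) (fun y => ?_)) x <;> simp [ccompAssocBwd]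
  · rcases ccomp_vertex_cases A (ccomp B C) v with ⟨x, rfl⟩ | ⟨w, rfl⟩
    · exact .inl ⟨ccompInl A B x, by simp⟩
    rcases ccomp_vertex_cases B C w with ⟨y, rfl⟩ | ⟨z, rfl⟩
    · exact .inl ⟨ccompInr A B y, by simp⟩
    · exact .inr ⟨z, rfl⟩
  · obtain ⟨u, rfl⟩ := finSumFinEquiv.surjective e
    rcases u with x | y
    · rw [ccompAssocEdges_inl_inl, ccomp_edg_inl_s10, ccomp_edg_inl_s10]
      simp [Function.comp_def]
    · rw [ccompAssocEdges_inl_inr, ccomp_edg_inr_s10 A (ccomp B C) (finSumFinEquiv (.inl y)),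
        ccomp_edg_inl_s10, ccomp_edg_inr_s10]
      simp [Function.comp_def]
  · rw [ccompAssocEdges_inr, ccomp_edg_inr_s10 A (ccomp B C) (finSumFinEquiv (.inr z)), ccomp_edg_inr_s10]
    rfl
  · rcases Finset.mem_union.mp h with hA | hB
    · rw [ccomp_src_of_mem_left_s10 A B hA, ccompAssocLeft_inl, ccomp_src_of_mem_left_s10 A _ hA]
    · have hBC : s ∈ (ccomp B C).srt := Finset.mem_union_left _ hB
      rw [ccomp_src_of_mem_right_s10 A B hB, ccompAssocLeft_inr, ccomp_src_of_mem_right_s10 A _ hBC,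
        ccomp_src_of_mem_left_s10 B C hB]
  · have hBC : s ∈ (ccomp B C).srt := Finset.mem_union_right _ h
    rw [ccomp_src_of_mem_right_s10 A _ hBC, ccomp_src_of_mem_right_s10 B C h]
    rfl

end Associativity

def basicCtx (α : Equiv.Perm ℕ) (τ : Finset ℕ) (G X : CG Lab ar) : CG Lab ar :=
  crename α (crestrict τ (ccomp X G))

section BasicContexts

variable {α : Equiv.Perm ℕ} {τ : Finset ℕ} {G X : CG Lab ar}

theorem basicCtx_congr_iso {Y : CG Lab ar} (h : Iso X Y) :
    Iso (basicCtx α τ G X) (basicCtx α τ G Y) :=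
  ((h.ccomp (Iso.refl G)).crestrict τ).crename α

theorem basicCtx_iso_conj (β : Equiv.Perm ℕ) :
    Iso (basicCtx α τ G X)
      (basicCtx (β.symm * α) (τ.image β.symm) (crename β G) (crename β X)) := by
  have hα : β * (β.symm * α) = α := by
    ext x
    simp [Equiv.Perm.mul_apply]
  have hren := crename_crename_iso (β.symm * α) β (crestrict τ (ccomp X G))
  rw [hα] at hren
  calc basicCtx α τ G X
      Iso _ (crename (β.symm * α) (crename β (crestrict τ (ccomp X G)))) := hren.symm
      Iso _ (crename (β.symm * α) (crestrict (τ.image β.symm) (crename β (ccomp X G)))) :=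
        (crename_crestrict_iso β τ _).crename _
      Iso _ (basicCtx (β.symm * α) (τ.image β.symm) (crename β G) (crename β X)) :=
        ((ccomp_crename_iso β X G).symm.crestrict _).crename _

theorem basicCtx_crename_iso (β : Equiv.Perm ℕ) :
    Iso (basicCtx α τ G (crename β X)) (basicCtx (β * α) (τ.image β) (crename β.symm G) X) := by
  have hX : Iso (crename β.symm (crename β X)) X :=
    (crename_crename_iso _ _ X).trans (crename_iso_self_of_fix fun x _ => by simp)
  simpa using (basicCtx_iso_conj (α := α) (τ := τ) (G := G) β.symm).trans (basicCtx_congr_iso hX)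

theorem basicCtx_crestrict_iso {τ' : Finset ℕ} {β : Equiv.Perm ℕ}
    (hfix : ∀ x ∈ X.srt ∩ τ', β x = x) (hfresh : X.srt ∩ (crename β G).srt ⊆ τ') :
    Iso (basicCtx α τ G (crestrict τ' X))
      (basicCtx (β.symm * α) ((X.srt ∩ τ' ∪ (crename β G).srt) ∩ τ.image β.symm)
        (crename β G) X) :=
  calc basicCtx α τ G (crestrict τ' X)
      Iso _ (basicCtx (β.symm * α) (τ.image β.symm) (crename β G) (crename β (crestrict τ' X))) :=
        basicCtx_iso_conj β
      Iso _ (basicCtx (β.symm * α) (τ.image β.symm) (crename β G) (crestrict τ' X)) :=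
        basicCtx_congr_iso (crename_iso_self_of_fix hfix)
      Iso _ (crename (β.symm * α) (crestrict (τ.image β.symm)
          (crestrict (X.srt ∩ τ' ∪ (crename β G).srt) (ccomp X (crename β G))))) :=
        ((ccomp_crestrict_iso hfresh).crestrict _).crename _
      Iso _ _ := (crestrict_crestrict_iso _ _ _).crename _

theorem basicCtx_ccomp_iso (Z : CG Lab ar) :
    Iso (basicCtx α τ G (ccomp X Z)) (basicCtx α τ (ccomp Z G) X) :=
  ((ccomp_assoc_iso X Z G).crestrict τ).crename α

theorem basicCtx_czero_empty_iso (X : CG Lab ar) : Iso (basicCtx 1 X.srt (czero ∅) X) X :=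
  (crename_iso_self_of_fix fun _ _ => rfl).trans
    ((crestrict_iso_self (Finset.union_empty X.srt).subset).trans (ccomp_czero_empty_iso X))

end BasicContexts

def BasicCtxEquiv (L : Set (CG Lab ar)) (X Y : CG Lab ar) : Prop :=
  X.srt = Y.srt ∧ ∀ (G : CG Lab ar) (α : Equiv.Perm ℕ), IsFinPerm α → ∀ τ : Finset ℕ,
    (basicCtx α τ G X ∈ L ↔ basicCtx α τ G Y ∈ L)

namespace BasicCtxEquiv

variable {L : Set (CG Lab ar)} {X Y : CG Lab ar}

theorem refl (X : CG Lab ar) : BasicCtxEquiv L X X :=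
  ⟨rfl, fun _ _ _ _ => Iff.rfl⟩

theorem trans {Z : CG Lab ar} (h₁ : BasicCtxEquiv L X Y) (h₂ : BasicCtxEquiv L Y Z) :
    BasicCtxEquiv L X Z :=
  ⟨h₁.1.trans h₂.1, fun G α hα τ => (h₁.2 G α hα τ).trans (h₂.2 G α hα τ)⟩

theorem of_iso_of_iso (hL : IsoClosed L) {X' Y' : CG Lab ar} (hX : Iso X' X) (hY : Iso Y' Y)
    (h : BasicCtxEquiv L X Y) : BasicCtxEquiv L X' Y' :=
  ⟨hX.1.trans (h.1.trans hY.1.symm), fun G α hα τ => by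
    rw [hL.mem_iff (basicCtx_congr_iso hX), hL.mem_iff (basicCtx_congr_iso hY)]
    exact h.2 G α hα τ⟩

theorem mem_iff (hL : IsoClosed L) (h : BasicCtxEquiv L X Y) : X ∈ L ↔ Y ∈ L := by
  rw [← hL.mem_iff (basicCtx_czero_empty_iso X), ← hL.mem_iff (basicCtx_czero_empty_iso Y), ← h.1]
  exact h.2 _ _ IsFinPerm.one _

theorem crename (hL : IsoClosed L) {β : Equiv.Perm ℕ} (hβ : IsFinPerm β)
    (h : BasicCtxEquiv L X Y) : BasicCtxEquiv L (crename β X) (crename β Y) :=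
  ⟨by rw [crename_srt, crename_srt, h.1], fun G α hα τ => by
    rw [hL.mem_iff (basicCtx_crename_iso β), hL.mem_iff (basicCtx_crename_iso β)]
    exact h.2 _ _ (hβ.mul hα) _⟩

theorem crestrict (hL : IsoClosed L) (τ' : Finset ℕ) (h : BasicCtxEquiv L X Y) :
    BasicCtxEquiv L (crestrict τ' X) (crestrict τ' Y) :=
  ⟨by rw [crestrict_srt, crestrict_srt, h.1], fun G α hα τ => by
    obtain ⟨β, hβ, hfix, hfresh⟩ := exists_isFinPerm_fresh X.srt G.srt τ'
    rw [hL.mem_iff (basicCtx_crestrict_iso hfix hfresh),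
      hL.mem_iff (basicCtx_crestrict_iso (h.1 ▸ hfix) (h.1 ▸ hfresh)), ← h.1]
    exact h.2 _ _ (hβ.symm.mul hα) _⟩

theorem ccomp_right (hL : IsoClosed L) (Z : CG Lab ar) (h : BasicCtxEquiv L X Y) :
    BasicCtxEquiv L (ccomp X Z) (ccomp Y Z) :=
  ⟨by rw [ccomp_srt, ccomp_srt, h.1], fun G α hα τ => by
    rw [hL.mem_iff (basicCtx_ccomp_iso Z), hL.mem_iff (basicCtx_ccomp_iso Z)]
    exact h.2 _ _ hα _⟩

theorem ccomp (hL : IsoClosed L) {X' Y' : CG Lab ar} (h : BasicCtxEquiv L X Y)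
    (h' : BasicCtxEquiv L X' Y') : BasicCtxEquiv L (ccomp X X') (ccomp Y Y') :=
  (h.ccomp_right hL X').trans
    ((h'.ccomp_right hL Y).of_iso_of_iso hL (ccomp_comm_iso _ _) (ccomp_comm_iso _ _))

theorem ctx_apply (hL : IsoClosed L) (h : BasicCtxEquiv L X Y) :
    ∀ c : HRCtx Lab ar, BasicCtxEquiv L (c.apply X) (c.apply Y)
  | .hole => h
  | .const G => refl G
  | .zero _ => refl _
  | .edge _ _ => refl _
  | .restrict τ c => (ctx_apply hL h c).crestrict hL τ
  | .rename _ hα c => (ctx_apply hL h c).crename hL hα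
  | .comp c₁ c₂ => (ctx_apply hL h c₁).ccomp hL (ctx_apply hL h c₂)

end BasicCtxEquiv

/-- For any set `L` of graphs, `G₁` and `G₂` are equivalent under
the syntactic congruence of `L` in the HR graph algebra iff they have the same sort
and for every graph `G`, every finite permutation `α` of source labels, and every
finite sort `τ`, `rename_α(restrict_τ(G₁ ∥ G)) ∈ L ⟺ rename_α(restrict_τ(G₂ ∥ G)) ∈ L`. -/
theorem syntactic_congruence_characterization {Lab : Type} {ar : Lab → ℕ}
    (L : Set (CG Lab ar)) (hiso : IsoClosed L) (G₁ G₂ : CG Lab ar) :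
    SynCongHR L G₁ G₂ ↔
      (G₁.srt = G₂.srt ∧ ∀ (G : CG Lab ar) (α : Equiv.Perm ℕ), IsFinPerm α →
        ∀ τ : Finset ℕ,
        (crename α (crestrict τ (ccomp G₁ G)) ∈ L ↔
         crename α (crestrict τ (ccomp G₂ G)) ∈ L)) := by
  constructor
  · rintro ⟨hsrt, hctx⟩
    exact ⟨hsrt, fun G α hα τ => hctx (.rename α hα (.restrict τ (.comp .hole (.const G))))⟩
  · intro h
    exact ⟨h.1, fun c => (BasicCtxEquiv.ctx_apply hiso h c).mem_iff hiso⟩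

end

end GraphCF
end
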